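/- arXiv:2503.11390 — 9 statements merged into one kernel-verified Lean document; each statement's English description precedes it below -/
import Mathlib

section
/- If F and G are cumulative distribution functions on the reals, then the closures of their ranges are equal if and only if F(F^{-1}(t)) = G(G^{-1}(t)) for Lebesgue-almost all t in (0,1), where F^{-1}(t) = inf{x : F(x) >= t} denotes the generalized inverse. -/
/-!
Write `S` for the closure of the range of a CDF `F`. For `t ∈ (0,1)` the value `F (F⁻¹ t)` lies
in `S`, is at least `t`, and no point of `S` lies strictly between `t` and it; hence it equals
`nextPoint S t = inf (S ∩ [t, ∞))` unless `t` is a point of `S` isolated from the right. There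
are only countably many such points, so `F ∘ F⁻¹` is a.e. a function of `S` alone. Conversely,
`nextPoint S` determines `S`: a point `x ∈ S` outside the closed set `T ∋ 0, 1` makes
`nextPoint S < nextPoint T` on a whole interval to the left of `x`.
-/

open MeasureTheory Set

/-- Generalized inverse (quantile function) of a distribution function. -/
noncomputable def quantile (F : ℝ → ℝ) (t : ℝ) : ℝ := sInf {x : ℝ | t ≤ F x}

/-- `F` is a cumulative distribution function on `ℝ`. -/
structure IsCDF (F : ℝ → ℝ) : Prop where
  mono : Monotone F
  rightCont : ∀ x, ContinuousWithinAt F (Set.Ici x) x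
  tendsto_bot : Filter.Tendsto F Filter.atBot (nhds 0)
  tendsto_top : Filter.Tendsto F Filter.atTop (nhds 1)

open Filter Topology

noncomputable def nextPoint (S : Set ℝ) (t : ℝ) : ℝ := sInf (S ∩ Ici t)

section nextPoint

variable {S T : Set ℝ} {t u x : ℝ}

theorem nextPoint_le (hx : x ∈ S) (htx : t ≤ x) : nextPoint S t ≤ x :=
  csInf_le ⟨t, fun _ hy => hy.2⟩ ⟨hx, htx⟩

theorem le_nextPoint (h : (S ∩ Ici t).Nonempty) : t ≤ nextPoint S t :=
  le_csInf h fun _ hy => hy.2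

theorem nextPoint_mem (hS : IsClosed S) (h : (S ∩ Ici t).Nonempty) : nextPoint S t ∈ S :=
  ((hS.inter isClosed_Ici).csInf_mem h ⟨t, fun _ hy => hy.2⟩).1

theorem nextPoint_eq_of_disjoint_Ioo (hu : u ∈ S) (htu : t ≤ u) (hgap : Disjoint (Ioo t u) S)
    (ht : t ∈ S → t = u) : nextPoint S t = u := by
  refine (nextPoint_le hu htu).antisymm (le_csInf ⟨u, hu, htu⟩ ?_)
  rintro y ⟨hyS, hty⟩
  rcases (show t ≤ y from hty).eq_or_lt with rfl | hty
  · exact (ht hyS).ge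
  · by_contra! hyu
    exact hgap.notMem_of_mem_left ⟨hty, hyu⟩ hyS

theorem subset_of_ae_nextPoint_eq (hS : S ⊆ Icc 0 1) (hT : IsClosed T) (h0 : 0 ∈ T) (h1 : 1 ∈ T)
    (h : ∀ᵐ t ∂volume.restrict (Ioo 0 1), nextPoint S t = nextPoint T t) : S ⊆ T := by
  intro x hxS
  by_contra hxT
  have hx0 : 0 < x := (hS hxS).1.lt_of_ne fun hx => hxT (hx ▸ h0)
  obtain ⟨l, r, ⟨hlx, hxr⟩, hlr⟩ :=
    (mem_nhds_iff_exists_Ioo_subset (a := x)).1 (hT.isOpen_compl.mem_nhds hxT)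
  -- On `(max l 0, x)` the next point of `T` has to jump over the gap `(l, r)` of `T`.
  have hI : Ioo (max l 0) x ⊆ Ioo 0 1 := fun t ht =>
    ⟨(le_max_right l 0).trans_lt ht.1, ht.2.trans_le (hS hxS).2⟩
  have hIpos : volume (Ioo (max l 0) x) ≠ 0 := by
    simp [Real.volume_Ioo, hlx, hx0]
  have := ae_restrict_neBot.2 hIpos
  obtain ⟨t, heq, ht⟩ :=
    ((ae_restrict_of_ae_restrict_of_subset hI h).and (ae_restrict_mem measurableSet_Ioo)).exists
  have hTt : (T ∩ Ici t).Nonempty := ⟨1, h1, (hI ht).2.le⟩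
  have hlt : l < nextPoint T t := ((le_max_left l 0).trans_lt ht.1).trans_le (le_nextPoint hTt)
  have hrT : r ≤ nextPoint T t := by
    by_contra! hnr
    exact hlr ⟨hlt, hnr⟩ (nextPoint_mem hT hTt)
  have := nextPoint_le hxS ht.2.le
  linarith

end nextPoint

namespace IsCDF

variable {F : ℝ → ℝ} {t x : ℝ}

theorem mem_Icc (hF : IsCDF F) (x : ℝ) : F x ∈ Icc 0 1 :=
  ⟨le_of_tendsto hF.tendsto_bot (eventually_atBot.2 ⟨x, fun _ hy => hF.mono hy⟩),
    ge_of_tendsto hF.tendsto_top (eventually_atTop.2 ⟨x, fun _ hy => hF.mono hy⟩)⟩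

theorem closure_range_subset_Icc (hF : IsCDF F) : closure (range F) ⊆ Icc 0 1 :=
  closure_minimal (range_subset_iff.2 hF.mem_Icc) isClosed_Icc

theorem zero_mem_closure_range (hF : IsCDF F) : (0 : ℝ) ∈ closure (range F) :=
  mem_closure_of_tendsto hF.tendsto_bot (.of_forall mem_range_self)

theorem one_mem_closure_range (hF : IsCDF F) : (1 : ℝ) ∈ closure (range F) :=
  mem_closure_of_tendsto hF.tendsto_top (.of_forall mem_range_self)

theorem bddBelow_setOf_le (hF : IsCDF F) (ht0 : 0 < t) : BddBelow {x | t ≤ F x} := by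
  obtain ⟨x₀, hx₀⟩ := eventually_atBot.1 (hF.tendsto_bot.eventually (gt_mem_nhds ht0))
  refine ⟨x₀, fun x hx => ?_⟩
  by_contra! hlt
  exact (hx₀ x hlt.le).not_ge hx

theorem nonempty_setOf_le (hF : IsCDF F) (ht1 : t < 1) : {x | t ≤ F x}.Nonempty :=
  let ⟨x, hx⟩ := (hF.tendsto_top.eventually (lt_mem_nhds ht1)).exists
  ⟨x, hx.le⟩

theorem apply_quantile_le (hF : IsCDF F) (ht0 : 0 < t) (hx : t ≤ F x) :
    F (quantile F t) ≤ F x :=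
  hF.mono (csInf_le (hF.bddBelow_setOf_le ht0) hx)

theorem le_apply_quantile (hF : IsCDF F) (ht1 : t < 1) : t ≤ F (quantile F t) := by
  have hright : ∀ y, quantile F t < y → t ≤ F y := fun y hy =>
    let ⟨x, hx, hxy⟩ := exists_lt_of_csInf_lt (hF.nonempty_setOf_le ht1) hy
    hx.trans (hF.mono hxy.le)
  exact ge_of_tendsto ((hF.rightCont _).mono_left (nhdsWithin_mono _ Ioi_subset_Ici_self))
    (eventually_mem_nhdsWithin.mono hright)

theorem disjoint_Ioo_apply_quantile (hF : IsCDF F) (ht0 : 0 < t) :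
    Disjoint (Ioo t (F (quantile F t))) (closure (range F)) := by
  refine Disjoint.closure_right ?_ isOpen_Ioo
  rw [disjoint_left]
  rintro _ ⟨hty, hyq⟩ ⟨x, rfl⟩
  exact (hF.apply_quantile_le ht0 hty.le).not_gt hyq

theorem apply_quantile_eq_nextPoint (hF : IsCDF F) (ht0 : 0 < t) (ht1 : t < 1)
    (ht : t ∈ closure (range F) → 𝓝[closure (range F) ∩ Ioi t] t ≠ ⊥) :
    F (quantile F t) = nextPoint (closure (range F)) t := by
  have hgap := hF.disjoint_Ioo_apply_quantile ht0
  refine (nextPoint_eq_of_disjoint_Ioo (subset_closure (mem_range_self _))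
    (hF.le_apply_quantile ht1) hgap fun htS => ?_).symm
  by_contra! hne
  refine ht htS (empty_mem_iff_bot.1 (mem_nhdsWithin.2
    ⟨Iio (F (quantile F t)), isOpen_Iio, ?_, ?_⟩))
  · exact (hF.le_apply_quantile ht1).lt_of_ne hne
  · rintro y ⟨hyq, hyS, hty⟩
    exact hgap.notMem_of_mem_left ⟨hty, hyq⟩ hyS

theorem ae_apply_quantile_eq_nextPoint (hF : IsCDF F) :
    ∀ᵐ t ∂volume.restrict (Ioo 0 1), F (quantile F t) = nextPoint (closure (range F)) t := by
  have hisolated := (countable_setOfPred_isolated_right_within (s := closure (range F))).ae_notMem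
    volume
  filter_upwards [ae_restrict_mem measurableSet_Ioo, ae_restrict_of_ae hisolated]
    with t ⟨ht0, ht1⟩ ht
  exact hF.apply_quantile_eq_nextPoint ht0 ht1 fun htS hbot => ht ⟨htS, hbot⟩

end IsCDF

/-- The closures of the ranges of two CDFs coincide iff `F ∘ F⁻¹ = G ∘ G⁻¹`
Lebesgue-almost everywhere on `(0,1)`. -/
theorem closure_range_eq_iff_comp_quantile_ae_eq
    (F G : ℝ → ℝ) (hF : IsCDF F) (hG : IsCDF G) :
    closure (Set.range F) = closure (Set.range G) ↔
      ∀ᵐ t ∂(volume.restrict (Set.Ioo (0:ℝ) 1)),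
        F (quantile F t) = G (quantile G t) := by
  constructor
  · intro h
    filter_upwards [hF.ae_apply_quantile_eq_nextPoint, hG.ae_apply_quantile_eq_nextPoint]
      with t htF htG
    rw [htF, htG, h]
  · intro h
    have hnext : ∀ᵐ t ∂volume.restrict (Ioo 0 1),
        nextPoint (closure (range F)) t = nextPoint (closure (range G)) t := by
      filter_upwards [h, hF.ae_apply_quantile_eq_nextPoint, hG.ae_apply_quantile_eq_nextPoint]
        with t ht htF htG
      rw [← htF, ← htG, ht]
    exact (subset_of_ae_nextPoint_eq hF.closure_range_subset_Icc isClosed_closure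
      hG.zero_mem_closure_range hG.one_mem_closure_range hnext).antisymm
      (subset_of_ae_nextPoint_eq hG.closure_range_subset_Icc isClosed_closure
        hF.zero_mem_closure_range hF.one_mem_closure_range (hnext.mono fun _ => Eq.symm))
end

section
/- Let D be a bivariate copula. Then the Markov product D∗D defined by (D∗D)(u,v) = ∫₀¹ ∂₁D(t,u) ∂₁D(t,v) dt is itself a bivariate copula. -/
/-!
The two-increasing property of `D` says that `x ↦ D x v₂ - D x v₁` is monotone for `v₁ ≤ v₂`.
This function is the primitive of `t ↦ ∂₁D(t,v₂) - ∂₁D(t,v₁)`, so by Lebesgue's differentiation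
theorem `∂₁D(t,·)` is monotone for almost every `t`. Hence
`(∂₁D(t,u₂) - ∂₁D(t,u₁)) (∂₁D(t,v₂) - ∂₁D(t,v₁)) ≥ 0` almost everywhere, and integrating gives the
two-increasing property of `D ∗ D`. The boundary conditions come from `∂₁D(t,0) = 0` and
`∂₁D(t,1) = 1` almost everywhere, which hold because `0 ≤ ∂₁D ≤ 1` and `D 1 0 = 0`, `D 1 1 = 1`.
-/

open Set MeasureTheory

/-- A bivariate copula on `[0,1]²`. -/
structure IsCopula (C : ℝ → ℝ → ℝ) : Prop where
  grounded₁ : ∀ u ∈ Icc (0:ℝ) 1, C u 0 = 0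
  grounded₂ : ∀ v ∈ Icc (0:ℝ) 1, C 0 v = 0
  margin₁ : ∀ u ∈ Icc (0:ℝ) 1, C u 1 = u
  margin₂ : ∀ v ∈ Icc (0:ℝ) 1, C 1 v = v
  twoIncreasing : ∀ u₁ u₂ v₁ v₂ : ℝ, u₁ ∈ Icc (0:ℝ) 1 → u₂ ∈ Icc (0:ℝ) 1 →
    v₁ ∈ Icc (0:ℝ) 1 → v₂ ∈ Icc (0:ℝ) 1 → u₁ ≤ u₂ → v₁ ≤ v₂ →
    C u₂ v₁ + C u₁ v₂ ≤ C u₂ v₂ + C u₁ v₁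

/-- `d` is a version of the first partial derivative `∂₁ D` of the copula `D`:
it is measurable in `t`, takes values in `[0,1]` almost everywhere on `(0,1)`,
and `D u v = ∫₀ᵘ d(t,v) dt`. -/
structure IsPartialDeriv₁ (D : ℝ → ℝ → ℝ) (d : ℝ → ℝ → ℝ) : Prop where
  meas : ∀ v ∈ Icc (0:ℝ) 1,
    AEStronglyMeasurable (fun t => d t v) (volume.restrict (Ioo (0:ℝ) 1))
  mem_Icc : ∀ v ∈ Icc (0:ℝ) 1,
    ∀ᵐ t ∂(volume.restrict (Ioo (0:ℝ) 1)), d t v ∈ Icc (0:ℝ) 1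
  integral_rep : ∀ v ∈ Icc (0:ℝ) 1, ∀ u ∈ Icc (0:ℝ) 1,
    D u v = ∫ t in (0:ℝ)..u, d t v

theorem ae_nonneg_of_monotoneOn_intervalIntegral {f : ℝ → ℝ} {a b : ℝ}
    (hf : IntervalIntegrable f volume a b)
    (hmono : MonotoneOn (fun x => ∫ t in a..x, f t) (Ioo a b)) :
    ∀ᵐ t ∂volume.restrict (Ioo a b), 0 ≤ f t := by
  filter_upwards [ae_restrict_of_ae hf.ae_hasDerivAt_integral, ae_restrict_mem measurableSet_Ioo]
    with x hderiv hx
  have hacc : AccPt x (Filter.principal (Ioo a b)) := accPt_iff_frequently_nhdsNE.2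
    (eventually_nhdsWithin_of_eventually_nhds (Ioo_mem_nhds hx.1 hx.2)).frequently
  exact (hderiv (Icc_subset_uIcc (Ioo_subset_Icc_self hx)) a left_mem_uIcc).hasDerivWithinAt
    |>.nonneg_of_monotoneOn hacc hmono

theorem integral_mul_add_integral_mul_le_of_ae_le {α : Type*} [MeasurableSpace α]
    {μ : Measure α} {f₁ f₂ g₁ g₂ : α → ℝ}
    (h₁₁ : Integrable (fun x => f₁ x * g₁ x) μ) (h₁₂ : Integrable (fun x => f₁ x * g₂ x) μ)
    (h₂₁ : Integrable (fun x => f₂ x * g₁ x) μ) (h₂₂ : Integrable (fun x => f₂ x * g₂ x) μ)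
    (hf : f₁ ≤ᵐ[μ] f₂) (hg : g₁ ≤ᵐ[μ] g₂) :
    ∫ x, f₂ x * g₁ x ∂μ + ∫ x, f₁ x * g₂ x ∂μ ≤ ∫ x, f₂ x * g₂ x ∂μ + ∫ x, f₁ x * g₁ x ∂μ := by
  rw [← integral_add h₂₁ h₁₂, ← integral_add h₂₂ h₁₁]
  refine integral_mono_ae (h₂₁.add h₁₂) (h₂₂.add h₁₁) ?_
  filter_upwards [hf, hg] with x hfx hgx
  nlinarith [mul_nonneg (sub_nonneg.2 hfx) (sub_nonneg.2 hgx)]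

theorem IsCopula.monotoneOn_sub {D : ℝ → ℝ → ℝ} (hD : IsCopula D) {v₁ v₂ : ℝ}
    (hv₁ : v₁ ∈ Icc (0:ℝ) 1) (hv₂ : v₂ ∈ Icc (0:ℝ) 1) (hv : v₁ ≤ v₂) :
    MonotoneOn (fun x => D x v₂ - D x v₁) (Icc 0 1) := fun x hx y hy hxy => by
  have := hD.twoIncreasing x y v₁ v₂ hx hy hv₁ hv₂ hxy hv
  simp only
  linarith

namespace IsPartialDeriv₁

variable {D d : ℝ → ℝ → ℝ} {u v : ℝ}

theorem integrable (hd : IsPartialDeriv₁ D d) (hv : v ∈ Icc (0:ℝ) 1) :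
    Integrable (fun t => d t v) (volume.restrict (Ioo (0:ℝ) 1)) := by
  refine .of_bound (hd.meas v hv) 1 ?_
  filter_upwards [hd.mem_Icc v hv] with t ht
  rw [Real.norm_of_nonneg ht.1]
  exact ht.2

theorem integrable_mul (hd : IsPartialDeriv₁ D d) (hu : u ∈ Icc (0:ℝ) 1)
    (hv : v ∈ Icc (0:ℝ) 1) :
    Integrable (fun t => d t u * d t v) (volume.restrict (Ioo (0:ℝ) 1)) := by
  refine .of_bound ((hd.meas u hu).mul (hd.meas v hv)) 1 ?_
  filter_upwards [hd.mem_Icc u hu, hd.mem_Icc v hv] with t htu htv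
  rw [Real.norm_of_nonneg (mul_nonneg htu.1 htv.1)]
  exact mul_le_one₀ htu.2 htv.1 htv.2

theorem intervalIntegrable (hd : IsPartialDeriv₁ D d) (hv : v ∈ Icc (0:ℝ) 1) {a b : ℝ}
    (ha : a ∈ Icc (0:ℝ) 1) (hb : b ∈ Icc (0:ℝ) 1) :
    IntervalIntegrable (fun t => d t v) volume a b := by
  have h01 : IntervalIntegrable (fun t => d t v) volume 0 1 := by
    rw [intervalIntegrable_iff_integrableOn_Ioc_of_le zero_le_one,
      integrableOn_Ioc_iff_integrableOn_Ioo]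
    exact hd.integrable hv
  exact h01.mono_set (uIcc_subset_uIcc (Icc_subset_uIcc ha) (Icc_subset_uIcc hb))

theorem setIntegral_eq (hd : IsPartialDeriv₁ D d) (hv : v ∈ Icc (0:ℝ) 1) :
    ∫ t in Ioo (0:ℝ) 1, d t v = D 1 v := by
  rw [hd.integral_rep v hv 1 (right_mem_Icc.2 zero_le_one),
    intervalIntegral.integral_of_le zero_le_one, integral_Ioc_eq_integral_Ioo]

theorem ae_eq_zero (hd : IsPartialDeriv₁ D d) (h : D 1 0 = 0) :
    ∀ᵐ t ∂volume.restrict (Ioo (0:ℝ) 1), d t 0 = 0 := by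
  have h0 : (0:ℝ) ∈ Icc (0:ℝ) 1 := left_mem_Icc.2 zero_le_one
  have hle : (fun _ => (0:ℝ)) ≤ᵐ[volume.restrict (Ioo (0:ℝ) 1)] fun t => d t 0 := by
    filter_upwards [hd.mem_Icc 0 h0] with t ht using ht.1
  exact ((integral_eq_iff_of_ae_le (integrable_zero _ _ _) (hd.integrable h0) hle).1
    (by rw [hd.setIntegral_eq h0, h]; simp)).symm

theorem ae_eq_one (hd : IsPartialDeriv₁ D d) (h : D 1 1 = 1) :
    ∀ᵐ t ∂volume.restrict (Ioo (0:ℝ) 1), d t 1 = 1 := by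
  have h1 : (1:ℝ) ∈ Icc (0:ℝ) 1 := right_mem_Icc.2 zero_le_one
  have hle : (fun t => d t 1) ≤ᵐ[volume.restrict (Ioo (0:ℝ) 1)] fun _ => (1:ℝ) := by
    filter_upwards [hd.mem_Icc 1 h1] with t ht using ht.2
  exact (integral_eq_iff_of_ae_le (hd.integrable h1) (integrable_const 1) hle).1
    (by rw [hd.setIntegral_eq h1, h]; simp)

theorem ae_le_of_le (hd : IsPartialDeriv₁ D d) (hD : IsCopula D) {v₁ v₂ : ℝ}
    (hv₁ : v₁ ∈ Icc (0:ℝ) 1) (hv₂ : v₂ ∈ Icc (0:ℝ) 1) (hv : v₁ ≤ v₂) :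
    ∀ᵐ t ∂volume.restrict (Ioo (0:ℝ) 1), d t v₁ ≤ d t v₂ := by
  have h0 : (0:ℝ) ∈ Icc (0:ℝ) 1 := left_mem_Icc.2 zero_le_one
  have h1 : (1:ℝ) ∈ Icc (0:ℝ) 1 := right_mem_Icc.2 zero_le_one
  have hprimitive : EqOn (fun x => D x v₂ - D x v₁)
      (fun x => ∫ t in (0:ℝ)..x, (d t v₂ - d t v₁)) (Icc 0 1) := fun x hx => by
    simp only
    rw [hd.integral_rep v₂ hv₂ x hx, hd.integral_rep v₁ hv₁ x hx, intervalIntegral.integral_sub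
      (hd.intervalIntegrable hv₂ h0 hx) (hd.intervalIntegrable hv₁ h0 hx)]
  have hmono := ((hD.monotoneOn_sub hv₁ hv₂ hv).congr hprimitive).mono Ioo_subset_Icc_self
  filter_upwards [ae_nonneg_of_monotoneOn_intervalIntegral
    ((hd.intervalIntegrable hv₂ h0 h1).sub (hd.intervalIntegrable hv₁ h0 h1)) hmono] with t ht
  exact sub_nonneg.1 ht

end IsPartialDeriv₁

/-- The Markov product `D ∗ D` of a copula `D` with itself is again a copula. -/
theorem markov_product_isCopula (D : ℝ → ℝ → ℝ) (d : ℝ → ℝ → ℝ)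
    (hD : IsCopula D) (hd : IsPartialDeriv₁ D d) :
    IsCopula (fun u v => ∫ t in (0:ℝ)..1, d t u * d t v) := by
  have h1 : (1:ℝ) ∈ Icc (0:ℝ) 1 := right_mem_Icc.2 zero_le_one
  have hzero := hd.ae_eq_zero (hD.grounded₁ 1 h1)
  have hone := hd.ae_eq_one (hD.margin₁ 1 h1)
  simp only [intervalIntegral.integral_of_le zero_le_one, integral_Ioc_eq_integral_Ioo]
  refine ⟨fun u _ => ?_, fun v _ => ?_, fun u hu => ?_, fun v hv => ?_, ?_⟩
  · refine integral_eq_zero_of_ae ?_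
    filter_upwards [hzero] with t ht
    simp [ht]
  · refine integral_eq_zero_of_ae ?_
    filter_upwards [hzero] with t ht
    simp [ht]
  · refine (integral_congr_ae ?_).trans ((hd.setIntegral_eq hu).trans (hD.margin₂ u hu))
    filter_upwards [hone] with t ht
    simp [ht]
  · refine (integral_congr_ae ?_).trans ((hd.setIntegral_eq hv).trans (hD.margin₂ v hv))
    filter_upwards [hone] with t ht
    simp [ht]
  · intro u₁ u₂ v₁ v₂ hu₁ hu₂ hv₁ hv₂ hu hv
    exact integral_mul_add_integral_mul_le_of_ae_le (hd.integrable_mul hu₁ hv₁)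
      (hd.integrable_mul hu₁ hv₂) (hd.integrable_mul hu₂ hv₁) (hd.integrable_mul hu₂ hv₂)
      (hd.ae_le_of_le hD hu₁ hu₂ hu) (hd.ae_le_of_le hD hv₁ hv₂ hv)
end

section
/- If (D_n) is a sequence of bivariate copulas that ∂₁-converges to a bivariate copula D, i.e., ∫₀¹ |∂₁D_n(t,u) - ∂₁D(t,u)| dt → 0 for every u ∈ [0,1], then the Markov products converge pointwise: (D_n ∗ D_n)(u,v) → (D ∗ D)(u,v) for all u,v ∈ [0,1]. -/
open Set MeasureTheory

private lemma integ_aux {f : ℝ → ℝ}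
    (hm : AEStronglyMeasurable f (volume.restrict (Ioo (0:ℝ) 1)))
    (hb : ∀ᵐ t ∂(volume.restrict (Ioo (0:ℝ) 1)), f t ∈ Icc (0:ℝ) 1) :
    Integrable f (volume.restrict (Ioo (0:ℝ) 1)) := by
  refine Integrable.mono' (integrable_const 1) hm ?_
  filter_upwards [hb] with t ht
  rw [Real.norm_eq_abs, abs_le]
  exact ⟨by linarith [ht.1], ht.2⟩

private lemma prod_integ_aux {f g : ℝ → ℝ}
    (hmf : AEStronglyMeasurable f (volume.restrict (Ioo (0:ℝ) 1)))
    (hbf : ∀ᵐ t ∂(volume.restrict (Ioo (0:ℝ) 1)), f t ∈ Icc (0:ℝ) 1)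
    (hmg : AEStronglyMeasurable g (volume.restrict (Ioo (0:ℝ) 1)))
    (hbg : ∀ᵐ t ∂(volume.restrict (Ioo (0:ℝ) 1)), g t ∈ Icc (0:ℝ) 1) :
    Integrable (fun t => f t * g t) (volume.restrict (Ioo (0:ℝ) 1)) := by
  refine Integrable.mono' (integrable_const 1) (hmf.mul hmg) ?_
  filter_upwards [hbf, hbg] with t hf hg
  rw [Real.norm_eq_abs, abs_mul]
  calc |f t| * |g t| ≤ 1 * 1 := by
        exact mul_le_mul (abs_le.2 ⟨by linarith [hf.1], hf.2⟩)
          (abs_le.2 ⟨by linarith [hg.1], hg.2⟩) (abs_nonneg _) zero_le_one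
    _ = 1 := by ring

open Filter in
/-- If copulas `Dₙ` ∂₁-converge to a copula `D`, then the Markov products
`Dₙ ∗ Dₙ` converge pointwise to `D ∗ D` on `[0,1]²`. -/
theorem markov_product_tendsto_of_partial_deriv_convergence
    (Dn : ℕ → ℝ → ℝ → ℝ) (dn : ℕ → ℝ → ℝ → ℝ) (D d : ℝ → ℝ → ℝ)
    (hDn : ∀ n, IsCopula (Dn n)) (hdn : ∀ n, IsPartialDeriv₁ (Dn n) (dn n))
    (hD : IsCopula D) (hd : IsPartialDeriv₁ D d)
    (hconv : ∀ u ∈ Icc (0:ℝ) 1,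
      Tendsto (fun n => ∫ t in (0:ℝ)..1, |dn n t u - d t u|) atTop (nhds 0)) :
    ∀ u ∈ Icc (0:ℝ) 1, ∀ v ∈ Icc (0:ℝ) 1,
      Tendsto (fun n => ∫ t in (0:ℝ)..1, dn n t u * dn n t v) atTop
        (nhds (∫ t in (0:ℝ)..1, d t u * d t v)) := by
  intro u hu v hv
  set μ := volume.restrict (Ioo (0:ℝ) 1) with hμ
  have hμconv : ∀ g : ℝ → ℝ, (∫ t in (0:ℝ)..1, g t) = ∫ t, g t ∂μ := by
    intro g
    rw [intervalIntegral.integral_of_le zero_le_one,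
      MeasureTheory.integral_Ioc_eq_integral_Ioo]
  -- integrability facts
  have hifu : ∀ n, Integrable (fun t => dn n t u) μ :=
    fun n => integ_aux ((hdn n).meas u hu) ((hdn n).mem_Icc u hu)
  have hifv : ∀ n, Integrable (fun t => dn n t v) μ :=
    fun n => integ_aux ((hdn n).meas v hv) ((hdn n).mem_Icc v hv)
  have higu : Integrable (fun t => d t u) μ := integ_aux (hd.meas u hu) (hd.mem_Icc u hu)
  have higv : Integrable (fun t => d t v) μ := integ_aux (hd.meas v hv) (hd.mem_Icc v hv)
  have hipn : ∀ n, Integrable (fun t => dn n t u * dn n t v) μ :=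
    fun n => prod_integ_aux ((hdn n).meas u hu) ((hdn n).mem_Icc u hu)
      ((hdn n).meas v hv) ((hdn n).mem_Icc v hv)
  have hip : Integrable (fun t => d t u * d t v) μ :=
    prod_integ_aux (hd.meas u hu) (hd.mem_Icc u hu) (hd.meas v hv) (hd.mem_Icc v hv)
  -- key estimate
  have key : ∀ n, dist (∫ t, dn n t u * dn n t v ∂μ) (∫ t, d t u * d t v ∂μ)
      ≤ (∫ t, |dn n t u - d t u| ∂μ) + ∫ t, |dn n t v - d t v| ∂μ := by
    intro n
    rw [Real.dist_eq, ← MeasureTheory.integral_sub (hipn n) hip]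
    calc |∫ t, (dn n t u * dn n t v - d t u * d t v) ∂μ|
        ≤ ∫ t, |dn n t u * dn n t v - d t u * d t v| ∂μ :=
          by simpa [Real.norm_eq_abs] using
            MeasureTheory.norm_integral_le_integral_norm
              (fun t => dn n t u * dn n t v - d t u * d t v) (μ := μ)
      _ ≤ ∫ t, (|dn n t u - d t u| + |dn n t v - d t v|) ∂μ := by
          refine integral_mono_ae (((hipn n).sub hip).abs)
            (((hifu n).sub higu).abs.add (((hifv n).sub higv).abs)) ?_
          filter_upwards [(hdn n).mem_Icc v hv, hd.mem_Icc u hu] with t h1 h2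
          have : dn n t u * dn n t v - d t u * d t v
              = (dn n t u - d t u) * dn n t v + d t u * (dn n t v - d t v) := by ring
          rw [this]
          calc |(dn n t u - d t u) * dn n t v + d t u * (dn n t v - d t v)|
              ≤ |(dn n t u - d t u) * dn n t v| + |d t u * (dn n t v - d t v)| :=
                abs_add_le _ _
            _ ≤ |dn n t u - d t u| + |dn n t v - d t v| := by
                rw [abs_mul, abs_mul]
                have hbv : |dn n t v| ≤ 1 := abs_le.2 ⟨by linarith [h1.1], h1.2⟩
                have hbu : |d t u| ≤ 1 := abs_le.2 ⟨by linarith [h2.1], h2.2⟩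
                nlinarith [abs_nonneg (dn n t u - d t u), abs_nonneg (dn n t v - d t v),
                  abs_nonneg (dn n t v), abs_nonneg (d t u)]
      _ = (∫ t, |dn n t u - d t u| ∂μ) + ∫ t, |dn n t v - d t v| ∂μ :=
          integral_add (((hifu n).sub higu).abs) (((hifv n).sub higv).abs)
  -- conclude
  have hcu := hconv u hu
  have hcv := hconv v hv
  simp only [hμconv] at hcu hcv ⊢
  rw [tendsto_iff_dist_tendsto_zero]
  have hsum : Tendsto (fun n => (∫ t, |dn n t u - d t u| ∂μ) +
      ∫ t, |dn n t v - d t v| ∂μ) atTop (nhds 0) := by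
    simpa using hcu.add hcv
  exact squeeze_zero (fun n => dist_nonneg) key hsum
end

section
/- For a sequence of bivariate copulas (C_n) that are all stochastically increasing (SI), pointwise convergence of C_n to a copula C implies ∂₁-convergence: ∫₀¹ |∂₁C_n(t,u) - ∂₁C(t,u)| dt → 0 for every u ∈ [0,1]; in particular, the limit C is SI as well. -/
open Set MeasureTheory

/-- A copula `C` with partial derivative `d = ∂₁C` is stochastically increasing (SI)
if for every `u`, `t ↦ d(t,u)` agrees almost everywhere on `(0,1)` with a
non-increasing function. -/
def IsSI (d : ℝ → ℝ → ℝ) : Prop :=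
  ∀ u ∈ Icc (0:ℝ) 1, ∃ g : ℝ → ℝ, AntitoneOn g (Ioo (0:ℝ) 1) ∧
    ∀ᵐ t ∂(volume.restrict (Ioo (0:ℝ) 1)), d t u = g t

/-!
Fix `u` and let `gₙ` be antitone versions of `∂₁Cₙ(·,u)`. For `t < s` the slope of `Cₙ(·,u)`
over `[t,s]` lies between `gₙ s` and `gₙ t`, so `gₙ t` is squeezed between a right and a left
slope of `Cₙ(·,u)`. These slopes converge to those of `C(·,u)`, and by Lebesgue's
differentiation theorem `C(·,u)` has derivative `∂₁C(t,u)` at almost every `t`; hence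
`gₙ t → ∂₁C(t,u)` almost everywhere. Dominated convergence gives the `L¹` convergence, and the
a.e. limit of the (clamped to `[0,1]`) antitone `gₙ` agrees a.e. with their `liminf`, which is
antitone.
-/

open Filter Topology

theorem tendsto_of_slope_le_of_le_slope {F : ℕ → ℝ → ℝ} {F₀ : ℝ → ℝ} {c : ℕ → ℝ} {t D : ℝ}
    (hF₀ : HasDerivAt F₀ D t)
    (hconv : ∀ᶠ x in 𝓝 t, Tendsto (fun n => F n x) atTop (𝓝 (F₀ x)))
    (hright : ∀ᶠ s in 𝓝[>] t, ∀ n, slope (F n) t s ≤ c n)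
    (hleft : ∀ᶠ r in 𝓝[<] t, ∀ n, c n ≤ slope (F n) t r) :
    Tendsto c atTop (𝓝 D) := by
  have hslope : ∀ x, Tendsto (fun n => F n x) atTop (𝓝 (F₀ x)) →
      Tendsto (fun n => slope (F n) t x) atTop (𝓝 (slope F₀ t x)) := fun x hx => by
    simp only [slope_def_field]
    exact (hx.sub hconv.self_of_nhds).div_const _
  have hD := hasDerivAt_iff_tendsto_slope.1 hF₀
  refine tendsto_order.2 ⟨fun D' hD' => ?_, fun D' hD' => ?_⟩
  · obtain ⟨s, hs, hsc, hsconv⟩ := (((hD.mono_left (nhdsGT_le_nhdsNE t)).eventually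
      (lt_mem_nhds hD')).and (hright.and (nhdsWithin_le_nhds hconv))).exists
    filter_upwards [(hslope s hsconv).eventually (lt_mem_nhds hs)] with n hn
    exact hn.trans_le (hsc n)
  · obtain ⟨r, hr, hrc, hrconv⟩ := (((hD.mono_left (nhdsLT_le_nhdsNE t)).eventually
      (gt_mem_nhds hD')).and (hleft.and (nhdsWithin_le_nhds hconv))).exists
    filter_upwards [(hslope r hrconv).eventually (gt_mem_nhds hr)] with n hn
    exact (hrc n).trans_lt hn

theorem AntitoneOn.intervalIntegral_le_mul {g : ℝ → ℝ} {a b : ℝ} (hab : a ≤ b)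
    (hg : AntitoneOn g (Icc a b)) : ∫ x in a..b, g x ≤ (b - a) * g a := by
  have hg' : AntitoneOn g (uIcc a b) := by rwa [uIcc_of_le hab]
  calc ∫ x in a..b, g x ≤ ∫ _ in a..b, g a :=
        intervalIntegral.integral_mono_on hab hg'.intervalIntegrable intervalIntegrable_const
          fun x hx => hg (left_mem_Icc.2 hab) hx hx.1
    _ = (b - a) * g a := by rw [intervalIntegral.integral_const, smul_eq_mul]

theorem AntitoneOn.mul_le_intervalIntegral {g : ℝ → ℝ} {a b : ℝ} (hab : a ≤ b)
    (hg : AntitoneOn g (Icc a b)) : (b - a) * g b ≤ ∫ x in a..b, g x := by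
  have hg' : AntitoneOn g (uIcc a b) := by rwa [uIcc_of_le hab]
  calc (b - a) * g b = ∫ _ in a..b, g b := by rw [intervalIntegral.integral_const, smul_eq_mul]
    _ ≤ ∫ x in a..b, g x :=
        intervalIntegral.integral_mono_on hab intervalIntegrable_const hg'.intervalIntegrable
          fun x hx => hg hx (right_mem_Icc.2 hab) hx.2

theorem slope_integral_mem_Icc_of_ae_eq_antitoneOn {f g : ℝ → ℝ} {a t s : ℝ} (hts : t < s)
    (hft : IntervalIntegrable f volume a t) (hfs : IntervalIntegrable f volume a s)
    (hg : AntitoneOn g (Icc t s)) (hfg : f =ᵐ[volume.restrict (Ioc t s)] g) :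
    slope (fun x => ∫ y in a..x, f y) t s ∈ Icc (g s) (g t) := by
  have hst : 0 < s - t := sub_pos.2 hts
  have hint : ∫ y in t..s, f y = ∫ y in t..s, g y := by
    refine intervalIntegral.integral_congr_ae ?_
    rw [uIoc_of_le hts.le, ← ae_restrict_iff' measurableSet_Ioc]
    exact hfg
  rw [slope_def_field, intervalIntegral.integral_interval_sub_left hfs hft, hint, mem_Icc,
    le_div_iff₀ hst, div_le_iff₀ hst, mul_comm (g s), mul_comm (g t)]
  exact ⟨hg.mul_le_intervalIntegral hts.le, hg.intervalIntegral_le_mul hts.le⟩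

theorem ae_tendsto_of_ae_eq_antitoneOn_of_tendsto_integral {f : ℕ → ℝ → ℝ} {f₀ : ℝ → ℝ}
    {a b : ℝ} (hf : ∀ n, IntervalIntegrable (f n) volume a b)
    (hf₀ : IntervalIntegrable f₀ volume a b)
    (hanti : ∀ n, ∃ g, AntitoneOn g (Ioo a b) ∧ f n =ᵐ[volume.restrict (Ioo a b)] g)
    (hconv : ∀ x ∈ Ioo a b,
      Tendsto (fun n => ∫ t in a..x, f n t) atTop (𝓝 (∫ t in a..x, f₀ t))) :
    ∀ᵐ t ∂volume.restrict (Ioo a b), Tendsto (fun n => f n t) atTop (𝓝 (f₀ t)) := by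
  choose g hg hfg using hanti
  have hIoo : Ioo a b ⊆ uIcc a b := Ioo_subset_Icc_self.trans Icc_subset_uIcc
  have hint : ∀ n, ∀ x ∈ Ioo a b, IntervalIntegrable (f n) volume a x := fun n x hx =>
    (hf n).mono_set (uIcc_subset_uIcc_left (hIoo hx))
  have hslope : ∀ n, ∀ t ∈ Ioo a b, ∀ s ∈ Ioo a b, t < s →
      slope (fun x => ∫ y in a..x, f n y) t s ∈ Icc (g n s) (g n t) := fun n t ht s hs hts =>
    have hsub : Icc t s ⊆ Ioo a b := Icc_subset_Ioo ht.1 hs.2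
    slope_integral_mem_Icc_of_ae_eq_antitoneOn hts (hint n t ht) (hint n s hs) ((hg n).mono hsub)
      (ae_restrict_of_ae_restrict_of_subset (Ioc_subset_Icc_self.trans hsub) (hfg n))
  filter_upwards [ae_restrict_of_ae hf₀.ae_hasDerivAt_integral, ae_restrict_mem measurableSet_Ioo,
    ae_all_iff.2 hfg] with t hderiv ht hfgt
  refine (tendsto_of_slope_le_of_le_slope (hderiv (hIoo ht) a left_mem_uIcc)
    (eventually_of_mem (Ioo_mem_nhds ht.1 ht.2) hconv) ?_ ?_).congr fun n => (hfgt n).symm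
  · filter_upwards [Ioo_mem_nhdsGT ht.2] with s hs n
    exact (hslope n t ht s ⟨ht.1.trans hs.1, hs.2⟩ hs.1).2
  · filter_upwards [Ioo_mem_nhdsLT ht.1] with r hr n
    rw [slope_comm]
    exact (hslope n r ⟨hr.1, hr.2.trans ht.2⟩ t ht hr.2).1

theorem exists_antitoneOn_mem_Icc_ae_eq {α : Type*} [Preorder α] [MeasurableSpace α]
    {μ : Measure α} {s : Set α} {f g : α → ℝ} {a b : ℝ} (hab : a ≤ b) (hg : AntitoneOn g s)
    (hfg : f =ᵐ[μ] g) (hf : ∀ᵐ t ∂μ, f t ∈ Icc a b) :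
    ∃ g', AntitoneOn g' s ∧ (∀ t, g' t ∈ Icc a b) ∧ f =ᵐ[μ] g' := by
  refine ⟨fun t => max a (min b (g t)),
    (monotone_const.max (monotone_const.min monotone_id)).comp_antitoneOn hg,
    fun t => ⟨le_max_left _ _, max_le hab (min_le_left _ _)⟩, ?_⟩
  filter_upwards [hfg, hf] with t hfgt hft
  rw [← hfgt, min_eq_right hft.2, max_eq_right hft.1]

theorem exists_antitoneOn_ae_eq_of_ae_tendsto {α : Type*} [Preorder α] [MeasurableSpace α]
    {μ : Measure α} {s : Set α} {g : ℕ → α → ℝ} {f : α → ℝ} {a b : ℝ}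
    (hg : ∀ n, AntitoneOn (g n) s) (hgab : ∀ n t, g n t ∈ Icc a b)
    (hlim : ∀ᵐ t ∂μ, Tendsto (fun n => g n t) atTop (𝓝 (f t))) :
    ∃ G, AntitoneOn G s ∧ f =ᵐ[μ] G := by
  refine ⟨fun t => liminf (fun n => g n t) atTop, fun x hx y hy hxy => ?_, ?_⟩
  · exact liminf_le_liminf (.of_forall fun n => hg n hx hy hxy)
      (isBoundedUnder_of ⟨a, fun n => (hgab n y).1⟩)
      (isBoundedUnder_of ⟨b, fun n => (hgab n x).2⟩).isCoboundedUnder_ge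
  · filter_upwards [hlim] with t ht
    exact ht.liminf_eq.symm

theorem tendsto_integral_norm_sub_of_ae_tendsto {α E : Type*} [MeasurableSpace α]
    [NormedAddCommGroup E] {μ : Measure α} [IsFiniteMeasure μ] {F : ℕ → α → E} {f : α → E}
    {M : ℝ} (hF : ∀ n, AEStronglyMeasurable (F n) μ) (hbound : ∀ n, ∀ᵐ a ∂μ, ‖F n a‖ ≤ M)
    (hlim : ∀ᵐ a ∂μ, Tendsto (fun n => F n a) atTop (𝓝 (f a))) :
    Tendsto (fun n => ∫ a, ‖F n a - f a‖ ∂μ) atTop (𝓝 0) := by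
  have hf : AEStronglyMeasurable f μ := aestronglyMeasurable_of_tendsto_ae _ hF hlim
  have hfM : ∀ᵐ a ∂μ, ‖f a‖ ≤ M := by
    filter_upwards [hlim, ae_all_iff.2 hbound] with a ha hbd
    exact le_of_tendsto' ha.norm hbd
  rw [← integral_zero α ℝ (μ := μ)]
  refine tendsto_integral_of_dominated_convergence (fun _ => M + M)
    (fun n => ((hF n).sub hf).norm) (integrable_const _)
    (fun n => by
      filter_upwards [hbound n, hfM] with a h1 h2
      rw [norm_norm]
      exact (norm_sub_le _ _).trans (add_le_add h1 h2))
    (by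
      filter_upwards [hlim] with a ha
      simpa using (ha.sub_const (f a)).norm)

theorem IsPartialDeriv₁.ae_norm_le_one {D d : ℝ → ℝ → ℝ} (h : IsPartialDeriv₁ D d) {v : ℝ}
    (hv : v ∈ Icc (0:ℝ) 1) : ∀ᵐ t ∂volume.restrict (Ioo (0:ℝ) 1), ‖d t v‖ ≤ 1 := by
  filter_upwards [h.mem_Icc v hv] with t ht
  rw [Real.norm_eq_abs, abs_le]
  exact ⟨by linarith [ht.1], ht.2⟩

theorem IsPartialDeriv₁.intervalIntegrable_s9 {D d : ℝ → ℝ → ℝ} (h : IsPartialDeriv₁ D d) {v : ℝ}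
    (hv : v ∈ Icc (0:ℝ) 1) : IntervalIntegrable (fun t => d t v) volume 0 1 := by
  rw [intervalIntegrable_iff_integrableOn_Ioo_of_le zero_le_one]
  exact Integrable.of_bound (h.meas v hv) 1 (h.ae_norm_le_one hv)

open Filter in
theorem si_pointwise_implies_partial_deriv_convergence_general
    (Cn : ℕ → ℝ → ℝ → ℝ) (dn : ℕ → ℝ → ℝ → ℝ) (C d : ℝ → ℝ → ℝ)
    (hdn : ∀ n, IsPartialDeriv₁ (Cn n) (dn n))
    (hSI : ∀ n, IsSI (dn n))
    (hd : IsPartialDeriv₁ C d)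
    (hconv : ∀ u ∈ Icc (0:ℝ) 1, ∀ v ∈ Icc (0:ℝ) 1,
      Tendsto (fun n => Cn n u v) atTop (nhds (C u v))) :
    (∀ u ∈ Icc (0:ℝ) 1,
      Tendsto (fun n => ∫ t in (0:ℝ)..1, |dn n t u - d t u|) atTop (nhds 0)) ∧
    IsSI d := by
  have hae : ∀ u ∈ Icc (0:ℝ) 1, ∀ᵐ t ∂volume.restrict (Ioo (0:ℝ) 1),
      Tendsto (fun n => dn n t u) atTop (𝓝 (d t u)) := fun u hu =>
    ae_tendsto_of_ae_eq_antitoneOn_of_tendsto_integral (fun n => (hdn n).intervalIntegrable_s9 hu)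
      (hd.intervalIntegrable_s9 hu) (fun n => hSI n u hu) fun x hx => by
        have hx' := Ioo_subset_Icc_self hx
        rw [← hd.integral_rep u hu x hx']
        exact (hconv x hx' u hu).congr fun n => (hdn n).integral_rep u hu x hx'
  refine ⟨fun u hu => ?_, fun u hu => ?_⟩
  · simpa only [intervalIntegral.integral_of_le zero_le_one, integral_Ioc_eq_integral_Ioo,
      Real.norm_eq_abs] using
      tendsto_integral_norm_sub_of_ae_tendsto (fun n => (hdn n).meas u hu)
        (fun n => (hdn n).ae_norm_le_one hu) (hae u hu)
  · choose g hg hgIcc hfg using fun n =>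
      have ⟨g, hg, hfg⟩ := hSI n u hu
      exists_antitoneOn_mem_Icc_ae_eq zero_le_one hg hfg ((hdn n).mem_Icc u hu)
    refine exists_antitoneOn_ae_eq_of_ae_tendsto hg hgIcc ?_
    filter_upwards [hae u hu, ae_all_iff.2 hfg] with t ht hfgt
    exact ht.congr hfgt

open Filter in
/-- For stochastically increasing copulas, pointwise convergence implies
∂₁-convergence, and the limit copula is SI as well. -/
theorem si_pointwise_implies_partial_deriv_convergence
    (Cn : ℕ → ℝ → ℝ → ℝ) (dn : ℕ → ℝ → ℝ → ℝ) (C d : ℝ → ℝ → ℝ)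
    (hCn : ∀ n, IsCopula (Cn n)) (hdn : ∀ n, IsPartialDeriv₁ (Cn n) (dn n))
    (hSI : ∀ n, IsSI (dn n))
    (hC : IsCopula C) (hd : IsPartialDeriv₁ C d)
    (hconv : ∀ u ∈ Icc (0:ℝ) 1, ∀ v ∈ Icc (0:ℝ) 1,
      Tendsto (fun n => Cn n u v) atTop (nhds (C u v))) :
    (∀ u ∈ Icc (0:ℝ) 1,
      Tendsto (fun n => ∫ t in (0:ℝ)..1, |dn n t u - d t u|) atTop (nhds 0)) ∧
    IsSI d :=
  si_pointwise_implies_partial_deriv_convergence_general Cn dn C d hdn hSI hd hconv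
end

section
/- Let Y and Y' be real random variables on a common probability space that are conditionally independent given a random vector X and satisfy P(Y' ∈ · | X) = P(Y ∈ · | X) almost surely. Then X and Y are independent if and only if Y and Y' are independent. -/
/-!
Write `P(B | X)` for the conditional probability `μ⟦B | σ(X)⟧`. Conditional independence of `Y`
and `Y'` given `X`, together with equality of their conditional laws, gives
`P(Y ∈ s, Y' ∈ t) = E[P(Y ∈ s | X) P(Y ∈ t | X)]` and `P(Y' ∈ t) = P(Y ∈ t)`.
If `X ⊥ Y`, every `P(Y ∈ t | X)` is a.s. the constant `P(Y ∈ t)` and the right-hand side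
factorizes. Conversely, if `Y ⊥ Y'`, taking `s = t` gives
`E[P(Y ∈ t | X)²] = P(Y ∈ t)² = (E[P(Y ∈ t | X)])²`, so `P(Y ∈ t | X)` has variance zero and is
a.s. constant, which is exactly the independence of `X` and `Y`.
-/

open MeasureTheory ProbabilityTheory

variable {Ω : Type*} [mΩ : MeasurableSpace Ω] [StandardBorelSpace Ω] [Nonempty Ω]

/-- `Y'` is a conditionally independent copy of `Y` given `X`:
`Y ⊥ Y' | X` and the conditional distributions of `Y` and `Y'` given `X` coincide. -/
def IsCondIndepCopy {α : Type*} [mα : MeasurableSpace α]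
    (μ : Measure Ω) [IsFiniteMeasure μ] (X : Ω → α) (hX : Measurable X)
    (Y Y' : Ω → ℝ) : Prop :=
  CondIndepFun (mα.comap X) hX.comap_le Y Y' μ ∧
  ∀ s : Set ℝ, MeasurableSet s →
    μ[(Y ⁻¹' s).indicator (fun _ => (1:ℝ)) | mα.comap X] =ᵐ[μ]
      μ[(Y' ⁻¹' s).indicator (fun _ => (1:ℝ)) | mα.comap X]

open Filter

section FiniteMeasure

variable {Ω β : Type*} {m m₁ mΩ : MeasurableSpace Ω} [MeasurableSpace β]
  {μ : Measure Ω} [IsFiniteMeasure μ]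

lemma Indep_iff_measureReal :
    Indep m₁ m μ ↔ ∀ A B, MeasurableSet[m₁] A → MeasurableSet[m] B →
      μ.real (A ∩ B) = μ.real A * μ.real B := by
  rw [Indep_iff]
  refine forall₄_congr fun A B _ _ => ?_
  rw [measureReal_def, measureReal_def, measureReal_def, ← ENNReal.toReal_mul,
    ENNReal.toReal_eq_toReal_iff' (measure_ne_top _ _)
      (ENNReal.mul_ne_top (measure_ne_top _ _) (measure_ne_top _ _))]

lemma integral_condProb (hm : m ≤ mΩ) {A : Set Ω} (hA : MeasurableSet A) :
    ∫ ω, (μ⟦A | m⟧) ω ∂μ = μ.real A := by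
  rw [integral_condExp hm, integral_indicator_const _ hA, smul_eq_mul, mul_one]

lemma setIntegral_condProb (hm : m ≤ mΩ) {A B : Set Ω} (hA : MeasurableSet A)
    (hB : MeasurableSet[m] B) :
    ∫ ω in B, (μ⟦A | m⟧) ω ∂μ = μ.real (B ∩ A) := by
  rw [setIntegral_condExp hm ((integrable_const _).indicator hA) hB,
    setIntegral_indicator hA, setIntegral_const, smul_eq_mul, mul_one]

lemma memLp_condProb {A : Set Ω} (hA : MeasurableSet A) : MemLp (μ⟦A | m⟧) 2 μ :=
  ((memLp_const (1 : ℝ)).indicator hA).condExp one_le_two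

lemma CondIndepFun.measureReal_inter_preimage_eq_integral_condProb_mul [StandardBorelSpace Ω]
    {β' : Type*} [MeasurableSpace β'] {hm : m ≤ mΩ} {Y : Ω → β} {Y' : Ω → β'}
    (h : CondIndepFun m hm Y Y' μ) (hY : Measurable Y) (hY' : Measurable Y')
    {s : Set β} {t : Set β'} (hs : MeasurableSet s) (ht : MeasurableSet t) :
    μ.real (Y ⁻¹' s ∩ Y' ⁻¹' t) = ∫ ω, (μ⟦Y ⁻¹' s | m⟧) ω * (μ⟦Y' ⁻¹' t | m⟧) ω ∂μ := by
  rw [← integral_condProb hm ((hY hs).inter (hY' ht)), integral_congr_ae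
    ((condIndepFun_iff_condExp_inter_preimage_eq_mul hY hY').1 h s t hs ht)]

end FiniteMeasure

section ProbabilityMeasure

variable {Ω β : Type*} {m m₁ mΩ : MeasurableSpace Ω} [MeasurableSpace β]
  {μ : Measure Ω} [IsProbabilityMeasure μ]

lemma condProb_ae_eq_const_of_integral_sq (hm : m ≤ mΩ) {A : Set Ω} (hA : MeasurableSet A)
    (h : ∫ ω, (μ⟦A | m⟧) ω ^ 2 ∂μ = μ.real A ^ 2) :
    μ⟦A | m⟧ =ᵐ[μ] fun _ => μ.real A := by
  have hvar : Var[μ⟦A | m⟧; μ] = 0 := by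
    rw [variance_eq_sub (memLp_condProb hA), integral_condProb hm hA, ← h]
    simp only [Pi.pow_apply, sub_self]
  filter_upwards [ae_eq_integral_of_variance_eq_zero (memLp_condProb hA) hvar] with ω hω
  rw [hω, integral_condProb hm hA]

lemma indep_iff_condProb_ae_eq_const (hm : m ≤ mΩ) (hm₁ : m₁ ≤ mΩ) :
    Indep m m₁ μ ↔ ∀ A, MeasurableSet[m₁] A → μ⟦A | m⟧ =ᵐ[μ] fun _ => μ.real A := by
  refine ⟨fun h A hA => ?_, fun h => ?_⟩
  · refine (condExp_indep_eq hm₁ hm (stronglyMeasurable_const.indicator hA) h.symm).trans ?_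
    simp only [integral_indicator_const _ (hm₁ _ hA), smul_eq_mul, mul_one]
    rfl
  · rw [Indep_iff_measureReal]
    intro B A hB hA
    rw [← setIntegral_condProb hm (hm₁ _ hA) hB, setIntegral_congr_ae (hm _ hB)
      ((h A hA).mono fun _ hω _ => hω), setIntegral_const, smul_eq_mul]

lemma CondIndepFun.indepFun_iff_condProb_ae_eq_const [StandardBorelSpace Ω] {hm : m ≤ mΩ}
    {Y Y' : Ω → β} (h : CondIndepFun m hm Y Y' μ) (hY : Measurable Y) (hY' : Measurable Y')
    (hlaw : ∀ t, MeasurableSet t → μ⟦Y ⁻¹' t | m⟧ =ᵐ[μ] μ⟦Y' ⁻¹' t | m⟧) :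
    IndepFun Y Y' μ ↔
      ∀ t, MeasurableSet t → μ⟦Y ⁻¹' t | m⟧ =ᵐ[μ] fun _ => μ.real (Y ⁻¹' t) := by
  have hjoint : ∀ s t, MeasurableSet s → MeasurableSet t → μ.real (Y ⁻¹' s ∩ Y' ⁻¹' t) =
      ∫ ω, (μ⟦Y ⁻¹' s | m⟧) ω * (μ⟦Y ⁻¹' t | m⟧) ω ∂μ := fun s t hs ht => by
    rw [CondIndepFun.measureReal_inter_preimage_eq_integral_condProb_mul h hY hY' hs ht]
    exact integral_congr_ae (EventuallyEq.rfl.mul (hlaw t ht).symm)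
  have hmarginal : ∀ t, MeasurableSet t → μ.real (Y' ⁻¹' t) = μ.real (Y ⁻¹' t) := fun t ht => by
    rw [← integral_condProb hm (hY ht), ← integral_condProb hm (hY' ht),
      integral_congr_ae (hlaw t ht)]
  rw [IndepFun_iff_Indep, Indep_iff_measureReal]
  refine ⟨fun hind t ht => condProb_ae_eq_const_of_integral_sq hm (hY ht) ?_, ?_⟩
  · simp_rw [sq]
    rw [← hjoint t t ht ht, hind _ _ ⟨t, ht, rfl⟩ ⟨t, ht, rfl⟩, hmarginal t ht]
  · rintro hconst _ _ ⟨s, hs, rfl⟩ ⟨t, ht, rfl⟩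
    have hprod : (fun ω => (μ⟦Y ⁻¹' s | m⟧) ω * (μ⟦Y ⁻¹' t | m⟧) ω) =ᵐ[μ]
        fun _ => μ.real (Y ⁻¹' s) * μ.real (Y ⁻¹' t) := (hconst s hs).mul (hconst t ht)
    rw [hjoint s t hs ht, integral_congr_ae hprod, hmarginal t ht, integral_const, probReal_univ,
      one_smul]

end ProbabilityMeasure

/-- For the Markov product `(Y,Y')` of `(X,Y)`, the variables `X` and `Y` are
independent if and only if `Y` and `Y'` are independent. -/
theorem indep_iff_indep_markov_product {p : ℕ}
    (μ : Measure Ω) [IsProbabilityMeasure μ]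
    (X : Ω → (Fin p → ℝ)) (hX : Measurable X)
    (Y Y' : Ω → ℝ) (hY : Measurable Y) (hY' : Measurable Y')
    (hcopy : IsCondIndepCopy μ X hX Y Y') :
    IndepFun X Y μ ↔ IndepFun Y Y' μ := by
  obtain ⟨hci, hlaw⟩ := hcopy
  rw [CondIndepFun.indepFun_iff_condProb_ae_eq_const hci hY hY' hlaw, IndepFun_iff_Indep,
    indep_iff_condProb_ae_eq_const hX.comap_le hY.comap_le]
  exact ⟨fun h t ht => h _ ⟨t, ht, rfl⟩, fun h _ ⟨t, ht, hA⟩ => hA ▸ h t ht⟩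
end

section
/- Let Y' be a conditionally independent copy of Y given X (Markov product). If there is a measurable function f with Y = f(X) almost surely, then Y = Y' almost surely. Conversely, if Y = Y' almost surely, then Y is almost surely equal to a measurable function of X. -/
open MeasureTheory ProbabilityTheory

variable {Ω : Type*} [mΩ : MeasurableSpace Ω] [StandardBorelSpace Ω] [Nonempty Ω]

lemma indicator_one_congr {α : Type*} {x : α} {S T : Set α} (h : x ∈ S ↔ x ∈ T) :
    S.indicator (fun _ => (1:ℝ)) x = T.indicator (fun _ => (1:ℝ)) x := by
  by_cases hx : x ∈ S
  · rw [Set.indicator_of_mem hx, Set.indicator_of_mem (h.mp hx)]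
  · rw [Set.indicator_of_notMem hx, Set.indicator_of_notMem fun c => hx (h.mpr c)]

lemma mem_iff_of_indicator_one_eq {α : Type*} {x : α} {S T : Set α}
    (h : S.indicator (fun _ => (1:ℝ)) x = T.indicator (fun _ => (1:ℝ)) x) :
    x ∈ S ↔ x ∈ T := by
  constructor
  · intro h1
    by_contra h2
    rw [Set.indicator_of_mem h1, Set.indicator_of_notMem h2] at h
    exact one_ne_zero h
  · intro h2
    by_contra h1
    rw [Set.indicator_of_notMem h1, Set.indicator_of_mem h2] at h
    exact zero_ne_one h

/-- The sub-σ-algebra generated by `X`. -/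
abbrev subSigma {p : ℕ} (X : Ω → (Fin p → ℝ)) : MeasurableSpace Ω :=
  MeasurableSpace.comap X MeasurableSpace.pi

/-- If the conditional expectation of the indicator of `A` given the σ-algebra of `X` is a.e.
equal to the indicator of a `subSigma X`-measurable set `B`, then the indicators of `A` and `B`
are a.e. equal. -/
lemma indicator_ae_eq_of_condexp_eq_indicator {p : ℕ} (μ : Measure Ω) [IsProbabilityMeasure μ]
    {X : Ω → (Fin p → ℝ)} (hX : Measurable X)
    {A B : Set Ω} (hA : MeasurableSet A)
    (hB : MeasurableSet[subSigma X] B)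
    (h : μ[A.indicator (fun _ => (1:ℝ)) | subSigma X] =ᵐ[μ] B.indicator (fun _ => (1:ℝ))) :
    A.indicator (fun _ => (1:ℝ)) =ᵐ[μ] B.indicator (fun _ => (1:ℝ)) := by
  have hm : subSigma X ≤ mΩ := hX.comap_le
  have hBΩ : MeasurableSet[mΩ] B := hm _ hB
  have hAint : Integrable (A.indicator (fun _ => (1:ℝ))) μ :=
    (integrable_const (1:ℝ)).indicator hA
  -- total masses agree
  have h1 : (μ A).toReal = (μ B).toReal := by
    have e1 : ∫ x, A.indicator (fun _ => (1:ℝ)) x ∂μ = ∫ x, B.indicator (fun _ => (1:ℝ)) x ∂μ := by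
      rw [← integral_condExp hm (f := A.indicator (fun _ => (1:ℝ)))]
      exact integral_congr_ae h
    rwa [integral_indicator_const _ hA, integral_indicator_const _ hBΩ, smul_eq_mul, smul_eq_mul,
      mul_one, mul_one] at e1
  -- the measure of `A ∩ B` equals the measure of `B`
  have h2 : (μ (B ∩ A)).toReal = (μ B).toReal := by
    have e1 : ∫ x in B, A.indicator (fun _ => (1:ℝ)) x ∂μ
        = ∫ x in B, B.indicator (fun _ => (1:ℝ)) x ∂μ := by
      rw [← setIntegral_condExp hm hAint hB]
      exact setIntegral_congr_ae (hm _ hB) (h.mono fun x hx _ => hx)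
    rw [setIntegral_indicator hA, setIntegral_indicator hBΩ, Set.inter_self,
      setIntegral_const, setIntegral_const, smul_eq_mul, smul_eq_mul, mul_one, mul_one] at e1
    exact e1
  have hABfin : μ (B ∩ A) ≠ ⊤ := measure_ne_top μ _
  have hmub : μ (B ∩ A) = μ B :=
    (ENNReal.toReal_eq_toReal_iff' hABfin (measure_ne_top μ _)).mp h2
  have hmab : μ A = μ B :=
    (ENNReal.toReal_eq_toReal_iff' (measure_ne_top μ _) (measure_ne_top μ _)).mp h1
  -- deduce the symmetric difference is null
  have hBA : μ (B \ A) = 0 := by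
    rw [← Set.diff_self_inter,
      measure_diff Set.inter_subset_left (hBΩ.inter hA).nullMeasurableSet hABfin,
      hmub, tsub_self]
  have hAB : μ (A \ B) = 0 := by
    rw [← Set.diff_self_inter,
      measure_diff Set.inter_subset_left (hA.inter hBΩ).nullMeasurableSet (measure_ne_top μ _),
      Set.inter_comm, hmub, ← hmab, tsub_self]
  have hnull : μ ((A \ B) ∪ (B \ A)) = 0 := measure_union_null hAB hBA
  refine ae_iff.mpr (measure_mono_null ?_ hnull)
  intro x hx
  simp only [Set.mem_setOf_eq] at hx
  by_cases hxA : x ∈ A <;> by_cases hxB : x ∈ B <;>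
    simp only [Set.indicator_apply, hxA, hxB, if_true, if_false, Set.mem_union, Set.mem_diff] <;>
    simp [Set.indicator_apply, hxA, hxB] at hx <;> tauto

lemma measurable_real_tan : Measurable Real.tan := by
  have : Real.tan = fun x => Real.sin x / Real.cos x := funext fun x => Real.tan_eq_sin_div_cos x
  rw [this]
  exact Real.measurable_sin.div Real.measurable_cos

/-- Perfect dependence of `Y` on `X` (i.e. `Y = f(X)` a.s. for some measurable `f`)
holds if and only if `Y = Y'` almost surely, where `(Y,Y')` is the Markov
product of `(X,Y)`. -/
theorem perfect_dependence_iff_markov_product_diagonal {p : ℕ}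
    (μ : Measure Ω) [IsProbabilityMeasure μ]
    (X : Ω → (Fin p → ℝ)) (hX : Measurable X)
    (Y Y' : Ω → ℝ) (hY : Measurable Y) (hY' : Measurable Y')
    (hcopy : IsCondIndepCopy μ X hX Y Y') :
    (∃ f : (Fin p → ℝ) → ℝ, Measurable f ∧ Y =ᵐ[μ] fun ω => f (X ω)) ↔
      Y =ᵐ[μ] Y' := by
  have hm : subSigma X ≤ mΩ := hX.comap_le
  constructor
  · -- forward direction: Y = f(X) a.s. implies Y = Y' a.s.
    rintro ⟨f, hf, hYf⟩
    have key : ∀ q : ℚ, ∀ᵐ ω ∂μ, (Y ω ≤ (q:ℝ) ↔ Y' ω ≤ (q:ℝ)) := by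
      intro q
      set s : Set ℝ := Set.Iic (q:ℝ) with hs_def
      have hs : MeasurableSet s := measurableSet_Iic
      set B : Set Ω := (fun ω => f (X ω)) ⁻¹' s with hB_def
      have hBm : MeasurableSet[subSigma X] B := ⟨f ⁻¹' s, hf hs, rfl⟩
      have hBΩ : MeasurableSet[mΩ] B := hm _ hBm
      -- indicators of `Y ⁻¹' s` and `B` agree a.e.
      have hind : (Y ⁻¹' s).indicator (fun _ => (1:ℝ)) =ᵐ[μ] B.indicator (fun _ => (1:ℝ)) := by
        filter_upwards [hYf] with ω hω
        exact indicator_one_congr (by simp [Set.mem_preimage, hB_def, hω])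
      -- condexp of the indicator of `Y' ⁻¹' s` equals the indicator of `B` a.e.
      have hce : μ[(Y' ⁻¹' s).indicator (fun _ => (1:ℝ)) | subSigma X] =ᵐ[μ]
          B.indicator (fun _ => (1:ℝ)) := by
        refine ((hcopy.2 s hs).symm.trans ((condExp_congr_ae hind).trans ?_))
        rw [condExp_of_stronglyMeasurable hm
          ((stronglyMeasurable_const (β := ℝ)).indicator hBm)
          ((integrable_const (1:ℝ)).indicator hBΩ)]
      have h1 : (Y' ⁻¹' s).indicator (fun _ => (1:ℝ)) =ᵐ[μ] B.indicator (fun _ => (1:ℝ)) :=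
        indicator_ae_eq_of_condexp_eq_indicator μ hX (hY' hs) hBm hce
      have h2 : (Y ⁻¹' s).indicator (fun _ => (1:ℝ)) =ᵐ[μ]
          (Y' ⁻¹' s).indicator (fun _ => (1:ℝ)) := hind.trans h1.symm
      filter_upwards [h2] with ω hω
      simpa [hs_def, Set.mem_preimage, Set.mem_Iic] using mem_iff_of_indicator_one_eq hω
    have hall : ∀ᵐ ω ∂μ, ∀ q : ℚ, (Y ω ≤ (q:ℝ) ↔ Y' ω ≤ (q:ℝ)) := ae_all_iff.mpr key
    filter_upwards [hall] with ω hω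
    refine le_antisymm ?_ ?_
    · by_contra hlt
      push_neg at hlt
      obtain ⟨q, hq1, hq2⟩ := exists_rat_btwn hlt
      exact absurd ((hω q).mpr hq1.le) (not_le.mpr hq2)
    · by_contra hlt
      push_neg at hlt
      obtain ⟨q, hq1, hq2⟩ := exists_rat_btwn hlt
      exact absurd ((hω q).mp hq1.le) (not_le.mpr hq2)
  · -- converse: Y = Y' a.s. implies Y = f(X) a.s. for some measurable f
    intro hYY'
    classical
    -- work with the bounded transform V = arctan ∘ Y
    set s : ℚ → Set ℝ := fun q => Real.arctan ⁻¹' (Set.Iic (q:ℝ)) with hs_def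
    have hs : ∀ q, MeasurableSet (s q) := fun q => Real.measurable_arctan measurableSet_Iic
    -- for each rational q, the indicator of {arctan Y ≤ q} is a.e. equal to the indicator of
    -- an m-measurable set
    have key : ∀ q : ℚ, ∃ B : Set Ω, MeasurableSet[subSigma X] B ∧
        (Y ⁻¹' s q).indicator (fun _ => (1:ℝ)) =ᵐ[μ] B.indicator (fun _ => (1:ℝ)) := by
      intro q
      set g : Ω → ℝ := μ[(Y ⁻¹' s q).indicator (fun _ => (1:ℝ)) | subSigma X] with hg_def
      set g' : Ω → ℝ := μ[(Y' ⁻¹' s q).indicator (fun _ => (1:ℝ)) | subSigma X] with hg'_def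
      -- g = g' a.e. since Y = Y' a.e.
      have hgg' : g =ᵐ[μ] g' := by
        refine condExp_congr_ae ?_
        filter_upwards [hYY'] with ω hω
        exact indicator_one_congr (by simp [Set.mem_preimage, hω])
      -- conditional independence gives the product formula
      have hprod := (condIndepFun_iff_condExp_inter_preimage_eq_mul
        (hm' := hm) hY hY').mp hcopy.1 (s q) (s q) (hs q) (hs q)
      -- the intersection has the same indicator as Y⁻¹' s q a.e.
      have hinter : μ[(Y ⁻¹' s q ∩ Y' ⁻¹' s q).indicator (fun _ => (1:ℝ)) | subSigma X] =ᵐ[μ] g := by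
        refine condExp_congr_ae ?_
        filter_upwards [hYY'] with ω hω
        exact indicator_one_congr (by simp [Set.mem_inter_iff, Set.mem_preimage, hω])
      -- hence g = g * g a.e.
      have hsq : g =ᵐ[μ] fun ω => g ω * g ω := by
        filter_upwards [hinter, hprod, hgg'] with ω h1 h2 h3
        have hthis : g ω = g ω * g' ω := h1.symm.trans h2
        rw [← h3] at hthis
        exact hthis
      set B : Set Ω := g ⁻¹' (Set.Ici (1/2 : ℝ)) with hB_def
      have hBm : MeasurableSet[subSigma X] B :=
        (stronglyMeasurable_condExp (f := (Y ⁻¹' s q).indicator (fun _ => (1:ℝ)))).measurable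
          measurableSet_Ici
      have hgB : g =ᵐ[μ] B.indicator (fun _ => (1:ℝ)) := by
        filter_upwards [hsq] with ω hω
        have h01 : g ω = 0 ∨ g ω = 1 := by
          have h0 : g ω * (g ω - 1) = 0 := by
            rw [mul_sub, mul_one, ← hω, sub_self]
          rcases mul_eq_zero.mp h0 with h | h
          · exact Or.inl h
          · exact Or.inr (by linarith)
        rcases h01 with h | h
        · have hnot : ω ∉ B := by
            simp only [hB_def, Set.mem_preimage, Set.mem_Ici, h]
            norm_num
          rw [Set.indicator_of_notMem hnot, h]
        · have hmem : ω ∈ B := by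
            simp only [hB_def, Set.mem_preimage, Set.mem_Ici, h]
            norm_num
          rw [Set.indicator_of_mem hmem, h]
      exact ⟨B, hBm, indicator_ae_eq_of_condexp_eq_indicator μ hX (hY (hs q)) hBm hgB⟩
    choose B hBm hBae using key
    -- each B q is a preimage under X of a measurable set
    have hcomap : ∀ q : ℚ, ∃ C : Set (Fin p → ℝ), MeasurableSet C ∧ X ⁻¹' C = B q := by
      intro q
      exact MeasurableSpace.measurableSet_comap.mp (hBm q)
    choose C hCmeas hCeq using hcomap
    -- define the candidate function
    set F : (Fin p → ℝ) → EReal :=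
      fun x => ⨅ q : ℚ, if x ∈ C q then (((q:ℝ) : EReal)) else (((2:ℝ) : EReal)) with hF_def
    have hF : Measurable F := by
      refine Measurable.iInf fun q => Measurable.ite (hCmeas q) measurable_const measurable_const
    refine ⟨fun x => Real.tan (F x).toReal, measurable_real_tan.comp hF.ereal_toReal, ?_⟩
    -- a.e. equality
    have hiff : ∀ᵐ ω ∂μ, ∀ q : ℚ, (X ω ∈ C q ↔ Real.arctan (Y ω) ≤ (q:ℝ)) := by
      rw [ae_all_iff]
      intro q
      filter_upwards [hBae q] with ω hω
      have hmem : ω ∈ Y ⁻¹' s q ↔ ω ∈ B q := mem_iff_of_indicator_one_eq hω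
      rw [← hCeq q] at hmem
      simpa [hs_def, Set.mem_preimage, Set.mem_Iic] using hmem.symm
    filter_upwards [hiff] with ω hω
    set v : ℝ := Real.arctan (Y ω) with hv_def
    have hv2 : v ≤ 2 := by
      have h1 : v < Real.pi / 2 := Real.arctan_lt_pi_div_two (Y ω)
      have h2 : Real.pi ≤ 4 := Real.pi_le_four
      linarith
    have hterm : ∀ q : ℚ, (if X ω ∈ C q then (((q:ℝ) : EReal)) else (((2:ℝ) : EReal)))
        = (if v ≤ (q:ℝ) then (((q:ℝ) : EReal)) else (((2:ℝ) : EReal))) := by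
      intro q
      exact if_congr (hω q) rfl rfl
    have hlow : ((v : ℝ) : EReal) ≤ F (X ω) := by
      refine le_iInf fun q => ?_
      rw [hterm q]
      split_ifs with hq
      · exact EReal.coe_le_coe_iff.mpr hq
      · exact EReal.coe_le_coe_iff.mpr hv2
    have hub : ∀ q : ℚ, v ≤ (q:ℝ) → F (X ω) ≤ ((q:ℝ) : EReal) := by
      intro q hq
      refine (iInf_le _ q).trans_eq ?_
      rw [hterm q, if_pos hq]
    obtain ⟨q0, hq0⟩ := exists_rat_gt v
    have hne_top : F (X ω) ≠ ⊤ := ((hub q0 hq0.le).trans_lt (EReal.coe_lt_top _)).ne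
    have hne_bot : F (X ω) ≠ ⊥ := ((EReal.bot_lt_coe v).trans_le hlow).ne'
    have hFr : F (X ω) = (((F (X ω)).toReal : ℝ) : EReal) :=
      (EReal.coe_toReal hne_top hne_bot).symm
    set r : ℝ := (F (X ω)).toReal with hr_def
    have hvr : v ≤ r := by
      rw [hFr] at hlow
      exact EReal.coe_le_coe_iff.mp hlow
    have hrv : r ≤ v := by
      by_contra hlt
      push_neg at hlt
      obtain ⟨q, hq1, hq2⟩ := exists_rat_btwn hlt
      have := hub q hq1.le
      rw [hFr] at this
      exact absurd (EReal.coe_le_coe_iff.mp this) (not_le.mpr hq2)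
    have hrveq : r = v := le_antisymm hrv hvr
    show Y ω = Real.tan (F (X ω)).toReal
    rw [← hr_def, hrveq, hv_def, Real.tan_arctan]
end

section
/- Let X be a non-degenerate real random variable whose distribution is symmetric around 0, set Y = X, X_n = X and Y_n = -X for all n. Let (Y,Y') and (Y_n,Y_n') denote the corresponding Markov products (conditionally independent copies given X_n resp. X). Then (Y_n, Y_n') has the same distribution as (Y, Y') for every n, yet (X_n, Y_n) = (X, -X) does not have the same distribution as (X, Y) = (X, X). -/
/-!
Since `X` and `-X` are `σ(X)`-measurable, their conditional laws given `X` are Dirac masses,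
so a copy with the same conditional law coincides with them almost surely. Both Markov products
are therefore the diagonal image of the law of `±X`, and these agree by symmetry. On the other
hand `(X, -X)` charges the diagonal only where `X = 0`, which is not almost sure.
-/

open MeasureTheory ProbabilityTheory

variable {Ω : Type*} [mΩ : MeasurableSpace Ω] [StandardBorelSpace Ω] [Nonempty Ω]

section

variable {α : Type*} {m m₀ : MeasurableSpace α} {μ : Measure α} [IsFiniteMeasure μ]

lemma measure_diff_eq_zero_of_condExp_indicator_eq (hm : m ≤ m₀) {A B : Set α}
    (hA : MeasurableSet A) (hB : MeasurableSet[m] B)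
    (h : μ[B.indicator (fun _ => (1:ℝ)) | m] =ᵐ[μ] μ[A.indicator (fun _ => (1:ℝ)) | m]) :
    μ (A \ B) = 0 := by
  have hBc : MeasurableSet Bᶜ := hm _ hB.compl
  have hcondExp_B : μ[B.indicator (fun _ => (1:ℝ)) | m] = B.indicator (fun _ => (1:ℝ)) :=
    condExp_of_stronglyMeasurable hm (stronglyMeasurable_const.indicator hB)
      ((integrable_const (1:ℝ)).indicator (hm _ hB))
  have hreal : μ.real (A \ B) = 0 :=
    calc μ.real (A \ B)
        = ∫ x in Bᶜ, A.indicator (fun _ => (1:ℝ)) x ∂μ := by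
          rw [setIntegral_indicator hA, Set.inter_comm, ← Set.sdiff_eq,
            setIntegral_const, smul_eq_mul, mul_one]
      _ = ∫ x in Bᶜ, μ[A.indicator (fun _ => (1:ℝ)) | m] x ∂μ :=
          (setIntegral_condExp hm ((integrable_const (1:ℝ)).indicator hA) hB.compl).symm
      _ = ∫ x in Bᶜ, B.indicator (fun _ => (1:ℝ)) x ∂μ := by
          rw [← hcondExp_B]
          exact setIntegral_congr_ae hBc (h.mono fun x hx _ => hx.symm)
      _ = 0 := by
          rw [setIntegral_indicator (hm _ hB), Set.compl_inter_self]
          simp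
  rwa [measureReal_eq_zero_iff] at hreal

lemma ae_eq_of_condExp_indicator_preimage_eq (hm : m ≤ m₀) {Z Y : α → ℝ}
    (hZ : Measurable[m] Z) (hY : Measurable Y)
    (h : ∀ s : Set ℝ, MeasurableSet s →
      μ[(Z ⁻¹' s).indicator (fun _ => (1:ℝ)) | m] =ᵐ[μ]
        μ[(Y ⁻¹' s).indicator (fun _ => (1:ℝ)) | m]) :
    Y =ᵐ[μ] Z := by
  have hIic : ∀ q : ℚ, ∀ᵐ x ∂μ, (Y x ≤ q ↔ Z x ≤ q) := by
    intro q
    have hs : MeasurableSet (Set.Iic (q : ℝ)) := measurableSet_Iic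
    have hdiff := measure_diff_eq_zero_of_condExp_indicator_eq hm (hY hs) (hZ hs) (h _ hs)
    have hdiff' := measure_diff_eq_zero_of_condExp_indicator_eq hm (hY hs.compl) (hZ hs.compl)
      (h _ hs.compl)
    rw [Set.preimage_compl, Set.preimage_compl, compl_sdiff_compl] at hdiff'
    exact (ae_eq_set.mpr ⟨hdiff, hdiff'⟩).mem_iff
  filter_upwards [ae_all_iff.mpr hIic] with x hx
  by_contra hne
  rcases lt_or_gt_of_ne hne with hlt | hlt
  · obtain ⟨q, hYq, hqZ⟩ := exists_rat_btwn hlt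
    exact hqZ.not_ge ((hx q).mp hYq.le)
  · obtain ⟨q, hZq, hqY⟩ := exists_rat_btwn hlt
    exact hqY.not_ge ((hx q).mpr hZq.le)

end

lemma ae_eq_of_map_prodMk_eq_map_diag {α β : Type*} [MeasurableSpace α] [MeasurableSpace β]
    [MeasurableEq β] {μ : Measure α} {X Y : α → β} (hX : Measurable X) (hY : Measurable Y)
    (h : Measure.map (fun x => (X x, Y x)) μ = Measure.map (fun x => (X x, X x)) μ) :
    Y =ᵐ[μ] X := by
  have hident : IdentDistrib (fun x => (X x, X x)) (fun x => (X x, Y x)) μ μ :=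
    ⟨(hX.prodMk hX).aemeasurable, (hX.prodMk hY).aemeasurable, h.symm⟩
  have hdiag := hident.ae_mem_snd (measurableSet_eq_fun measurable_fst measurable_snd)
    (Filter.Eventually.of_forall fun x => (rfl : X x = X x))
  exact hdiag.mono fun _ hx => hx.symm

omit [Nonempty Ω] in
lemma IsCondIndepCopy.ae_eq_of_measurable_comap {α : Type*} [mα : MeasurableSpace α]
    {μ : Measure Ω} [IsFiniteMeasure μ] {X : Ω → α} {hX : Measurable X} {Y Y' : Ω → ℝ}
    (h : IsCondIndepCopy μ X hX Y Y') (hY : Measurable[mα.comap X] Y) (hY' : Measurable Y') :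
    Y' =ᵐ[μ] Y :=
  ae_eq_of_condExp_indicator_preimage_eq hX.comap_le hY hY' h.2

/-- For a non-degenerate `X` symmetric around `0`, set `Y = X` and `Yₙ = -X`.
Then the Markov products `(Yₙ, Yₙ')` and `(Y, Y')` have the same distribution,
although `(X, Yₙ) = (X, -X)` and `(X, Y) = (X, X)` do not. -/
theorem markov_product_eq_distrib_but_joint_not
    (μ : Measure Ω) [IsProbabilityMeasure μ]
    (X : Ω → ℝ) (hX : Measurable X)
    (hsymm : Measure.map X μ = Measure.map (fun ω => -X ω) μ)
    (hnondeg : ¬ ∃ c : ℝ, X =ᵐ[μ] fun _ => c)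
    (Y' Yn' : Ω → ℝ) (hY' : Measurable Y') (hYn' : Measurable Yn')
    (hcopy : IsCondIndepCopy μ X hX X Y')
    (hcopyn : IsCondIndepCopy μ X hX (fun ω => -X ω) Yn') :
    Measure.map (fun ω => (-X ω, Yn' ω)) μ = Measure.map (fun ω => (X ω, Y' ω)) μ ∧
      Measure.map (fun ω => (X ω, -X ω)) μ ≠ Measure.map (fun ω => (X ω, X ω)) μ := by
  have hY'_eq : Y' =ᵐ[μ] X := hcopy.ae_eq_of_measurable_comap (comap_measurable X) hY'
  have hYn'_eq : Yn' =ᵐ[μ] fun ω => -X ω :=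
    hcopyn.ae_eq_of_measurable_comap (measurable_neg.comp (comap_measurable X)) hYn'
  refine ⟨?_, fun h => hnondeg ⟨0, ?_⟩⟩
  · have hdiag : Measurable fun x : ℝ => (x, x) := measurable_id.prodMk measurable_id
    calc Measure.map (fun ω => (-X ω, Yn' ω)) μ
        = Measure.map (fun ω => (-X ω, -X ω)) μ :=
          Measure.map_congr (hYn'_eq.mono fun ω hω => congrArg (Prod.mk (-X ω)) hω)
      _ = Measure.map (fun ω => (X ω, X ω)) μ :=
          (IdentDistrib.comp ⟨hX.neg.aemeasurable, hX.aemeasurable, hsymm.symm⟩ hdiag).map_eq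
      _ = Measure.map (fun ω => (X ω, Y' ω)) μ :=
          (Measure.map_congr (hY'_eq.mono fun ω hω => congrArg (Prod.mk (X ω)) hω)).symm
  · filter_upwards [ae_eq_of_map_prodMk_eq_map_diag hX hX.neg h] with ω hω
    exact self_eq_neg.mp hω.symm
end

section
/- Let (X,Y) be a random vector, Y' a conditionally independent copy of Y given X, ε_n a sequence of real random variables with ε_n → 0 in distribution and ε_n independent of (X,Y) for every n. Set Y_n := Y + ε_n and let Y_n' be a conditionally independent copy of Y_n given X. Then (Y_n, Y_n') converges in distribution to (Y, Y'). -/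
open MeasureTheory ProbabilityTheory

variable {Ω : Type*} [mΩ : MeasurableSpace Ω] [StandardBorelSpace Ω] [Nonempty Ω]

open Filter

open Topology TopologicalSpace

/-!
If `W'` is a conditionally independent copy of `W` given `X` and `κ` is the conditional law of `W`
given `X`, the law of `(W, W')` is the mixture `∫ κ x ⊗ κ x d(law X)`. Adding noise `ε`
independent of `(X, Y)` replaces `κ x` by `κ x ∗ law ε`, so that the law of `(Yₙ, Yₙ')` is the
law of `(Y, Y')` convolved with `law εₙ ⊗ law εₙ`. The latter tends weakly to `δ₀`, and
convolution with a fixed measure is weakly continuous.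
-/

instance Prod.instMeasurableAdd₂ {M N : Type*} [Add M] [MeasurableSpace M] [MeasurableAdd₂ M]
    [Add N] [MeasurableSpace N] [MeasurableAdd₂ N] : MeasurableAdd₂ (M × N) :=
  ⟨(measurable_fst.fst.add measurable_snd.fst).prodMk (measurable_fst.snd.add measurable_snd.snd)⟩

lemma MeasureTheory.Measure.conv_prod_conv {M N : Type*} [AddMonoid M] [MeasurableSpace M]
    [MeasurableAdd₂ M] [AddMonoid N] [MeasurableSpace N] [MeasurableAdd₂ N]
    (μ₁ ν₁ : Measure M) (μ₂ ν₂ : Measure N) [SFinite μ₁] [SFinite ν₁] [SFinite μ₂] [SFinite ν₂] :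
    (μ₁ ∗ ν₁).prod (μ₂ ∗ ν₂) = (μ₁.prod μ₂) ∗ (ν₁.prod ν₂) := by
  refine Measure.ext_of_lintegral _ fun f hf => ?_
  have hf' : Measurable fun q : (M × N) × (M × N) => f (q.1 + q.2) := by fun_prop
  calc ∫⁻ p, f p ∂(μ₁ ∗ ν₁).prod (μ₂ ∗ ν₂)
      = ∫⁻ x, ∫⁻ y, ∫⁻ z, ∫⁻ w, f (x + y, z + w) ∂ν₂ ∂μ₂ ∂ν₁ ∂μ₁ := by
        rw [lintegral_prod _ hf.aemeasurable, Measure.lintegral_conv (by fun_prop)]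
        refine lintegral_congr fun x => lintegral_congr fun y => ?_
        exact Measure.lintegral_conv (by fun_prop)
    _ = ∫⁻ x, ∫⁻ z, ∫⁻ y, ∫⁻ w, f (x + y, z + w) ∂ν₂ ∂ν₁ ∂μ₂ ∂μ₁ :=
        lintegral_congr fun x => lintegral_lintegral_swap (by fun_prop)
    _ = ∫⁻ p, f p ∂(μ₁.prod μ₂) ∗ (ν₁.prod ν₂) := by
        rw [Measure.lintegral_conv hf, lintegral_prod _ hf'.lintegral_prod_right'.aemeasurable]
        refine lintegral_congr fun x => lintegral_congr fun z => ?_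
        exact (lintegral_prod (fun q => f ((x, z) + q)) (by fun_prop)).symm

lemma MeasureTheory.Measure.comp_eq_conv_of_ae {α M : Type*} [MeasurableSpace α] [AddMonoid M]
    [MeasurableSpace M] [MeasurableAdd₂ M] {m : Measure α} {κ η : Kernel α M} {ρ : Measure M}
    [SFinite ρ] (h : ∀ᵐ x ∂m, η x = κ x ∗ ρ) :
    η ∘ₘ m = (κ ∘ₘ m) ∗ ρ := by
  refine Measure.ext_of_lintegral _ fun f hf => ?_
  have hf' : Measurable fun q : M × M => f (q.1 + q.2) := by fun_prop
  rw [Measure.lintegral_bind η.aemeasurable hf.aemeasurable, Measure.lintegral_conv hf,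
    Measure.lintegral_bind κ.aemeasurable hf'.lintegral_prod_right'.aemeasurable]
  refine lintegral_congr_ae ?_
  filter_upwards [h] with x hx
  rw [hx, Measure.lintegral_conv hf]

lemma ProbabilityTheory.Kernel.map_add_prod_const_apply {α M : Type*} [MeasurableSpace α]
    [AddMonoid M] [MeasurableSpace M] [MeasurableAdd₂ M]
    (κ : Kernel α M) [IsSFiniteKernel κ] (ν : Measure M) [SFinite ν] (x : α) :
    (κ ×ₖ Kernel.const α ν).map (fun p => p.1 + p.2) x = κ x ∗ ν := by
  rw [Kernel.map_apply _ (by fun_prop), Kernel.prod_apply, Kernel.const_apply]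
  rfl

lemma ProbabilityTheory.condDistrib_add_ae_eq_conv {Ω' α M : Type*} {mΩ' : MeasurableSpace Ω'}
    [MeasurableSpace α] [AddMonoid M] [MeasurableSpace M] [MeasurableAdd₂ M] [StandardBorelSpace M]
    [Nonempty M] {μ : Measure Ω'} [IsProbabilityMeasure μ] {X : Ω' → α}
    {Y ε : Ω' → M} (hX : Measurable X) (hY : Measurable Y) (hε : Measurable ε)
    (hind : IndepFun ε (fun ω => (X ω, Y ω)) μ) :
    ∀ᵐ x ∂μ.map X, condDistrib (fun ω => Y ω + ε ω) X μ x = condDistrib Y X μ x ∗ μ.map ε := by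
  set κ := condDistrib Y X μ
  set ν := μ.map ε
  have : IsProbabilityMeasure ν := Measure.isProbabilityMeasure_map hε.aemeasurable
  have hlaw : μ.map (fun ω => (X ω, Y ω + ε ω)) =
      μ.map X ⊗ₘ (κ ×ₖ Kernel.const α ν).map (fun p => p.1 + p.2) := by
    refine Measure.ext_of_lintegral _ fun f hf => ?_
    have hind' : μ.map (fun ω => ((X ω, Y ω), ε ω)) = (μ.map X ⊗ₘ κ).prod ν := by
      rw [compProd_map_condDistrib hY.aemeasurable]
      exact (indepFun_iff_map_prod_eq_prod_map_map (by fun_prop) hε.aemeasurable).mp hind.symm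
    calc ∫⁻ p, f p ∂μ.map (fun ω => (X ω, Y ω + ε ω))
        = ∫⁻ q, f (q.1.1, q.1.2 + q.2) ∂μ.map (fun ω => ((X ω, Y ω), ε ω)) := by
          rw [lintegral_map hf (by fun_prop), lintegral_map (by fun_prop) (by fun_prop)]
      _ = ∫⁻ x, ∫⁻ y, ∫⁻ e, f (x, y + e) ∂ν ∂κ x ∂μ.map X := by
          rw [hind', lintegral_prod _ (by fun_prop), Measure.lintegral_compProd (by fun_prop)]
      _ = ∫⁻ p, f p ∂(μ.map X ⊗ₘ (κ ×ₖ Kernel.const α ν).map (fun p => p.1 + p.2)) := by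
          rw [Measure.lintegral_compProd hf]
          refine lintegral_congr fun x => ?_
          rw [Kernel.map_add_prod_const_apply, Measure.lintegral_conv (by fun_prop)]
  filter_upwards [condDistrib_ae_eq_of_measure_eq_compProd X (by fun_prop) hlaw] with x hx
  rw [hx, Kernel.map_add_prod_const_apply]

namespace IsCondIndepCopy

omit [Nonempty Ω]

variable {α : Type*} [MeasurableSpace α] {μ : Measure Ω} [IsProbabilityMeasure μ]
  {X : Ω → α} {hX : Measurable X} {W W' : Ω → ℝ}

lemma map_prodMk_eq (h : IsCondIndepCopy μ X hX W W') (hW : Measurable W)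
    (hW' : Measurable W') :
    μ.map (fun ω => (X ω, W' ω)) = μ.map (fun ω => (X ω, W ω)) := by
  refine Measure.ext_prod fun {s t} hs ht => ?_
  have hXs : MeasurableSet[MeasurableSpace.comap X inferInstance] (X ⁻¹' s) := ⟨s, hs, rfl⟩
  have hslice : ∀ V : Ω → ℝ, Measurable V → μ.real (X ⁻¹' s ∩ V ⁻¹' t) =
      ∫ ω in X ⁻¹' s, (μ[(V ⁻¹' t).indicator (fun _ => (1:ℝ)) |
        MeasurableSpace.comap X inferInstance]) ω ∂μ := fun V hV => by
    rw [setIntegral_condExp hX.comap_le ((integrable_const 1).indicator (hV ht)) hXs,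
      setIntegral_indicator (hV ht), setIntegral_const, smul_eq_mul, mul_one]
  rw [Measure.map_apply (by fun_prop) (hs.prod ht), Measure.map_apply (by fun_prop) (hs.prod ht),
    ← measureReal_eq_measureReal_iff, Set.mk_preimage_prod, Set.mk_preimage_prod, hslice W' hW',
    hslice W hW]
  exact setIntegral_congr_ae (hX hs) ((h.2 t ht).mono fun _ h _ => h.symm)

lemma condDistrib_ae_eq (h : IsCondIndepCopy μ X hX W W') (hW : Measurable W)
    (hW' : Measurable W') :
    condDistrib W' X μ =ᵐ[μ.map X] condDistrib W X μ :=
  condDistrib_ae_eq_of_measure_eq_compProd X hW'.aemeasurable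
    ((h.map_prodMk_eq hW hW').trans (compProd_map_condDistrib hW.aemeasurable).symm)

lemma map_pair_eq_comp (h : IsCondIndepCopy μ X hX W W') (hW : Measurable W)
    (hW' : Measurable W') :
    μ.map (fun ω => (W ω, W' ω)) = (condDistrib W X μ ×ₖ condDistrib W X μ) ∘ₘ μ.map X := by
  have hjoint := (condIndepFun_iff_map_prod_eq_prod_condDistrib_prod_condDistrib hW hW' hX).mp h.1
  rw [Measure.comp_congr (η := Kernel.id ×ₖ (condDistrib W X μ ×ₖ condDistrib W X μ)) ?_]
    at hjoint
  · have hsnd := congrArg Measure.snd hjoint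
    rwa [Measure.snd_map_prodMk (by fun_prop), Measure.snd, Measure.map_comp _ _ measurable_snd,
      ← Kernel.snd_eq, Kernel.snd_prod] at hsnd
  · filter_upwards [h.condDistrib_ae_eq hW hW'] with x hx
    simp only [Kernel.prod_apply, hx]

lemma map_add_pair_eq_conv {Y Y' ε : Ω → ℝ} (hY : Measurable Y) (hY' : Measurable Y')
    (hε : Measurable ε) (hW' : Measurable W') (hcopy : IsCondIndepCopy μ X hX Y Y')
    (hind : IndepFun ε (fun ω => (X ω, Y ω)) μ)
    (hcopyε : IsCondIndepCopy μ X hX (fun ω => Y ω + ε ω) W') :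
    μ.map (fun ω => (Y ω + ε ω, W' ω)) =
      μ.map (fun ω => (Y ω, Y' ω)) ∗ (μ.map ε).prod (μ.map ε) := by
  have : IsProbabilityMeasure (μ.map ε) := Measure.isProbabilityMeasure_map hε.aemeasurable
  rw [hcopyε.map_pair_eq_comp (by fun_prop) hW', hcopy.map_pair_eq_comp hY hY']
  refine Measure.comp_eq_conv_of_ae ?_
  filter_upwards [condDistrib_add_ae_eq_conv hX hY hε hind] with x hx
  rw [Kernel.prod_apply, Kernel.prod_apply, hx, Measure.conv_prod_conv]

end IsCondIndepCopy

namespace MeasureTheory.ProbabilityMeasure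

variable {α β : Type*} [MeasurableSpace α] [MeasurableSpace β]

lemma diracProba_prod_diracProba (x : α) (y : β) :
    (diracProba x).prod (diracProba y) = diracProba (x, y) :=
  toMeasure_injective Measure.dirac_prod_dirac

variable [TopologicalSpace α] [SecondCountableTopology α] [PseudoMetrizableSpace α]
  [OpensMeasurableSpace α] [TopologicalSpace β] [SecondCountableTopology β]
  [PseudoMetrizableSpace β] [OpensMeasurableSpace β]

lemma tendsto_prod_diracProba {ι : Type*} {l : Filter ι} {ν : ι → ProbabilityMeasure α}
    {ν' : ι → ProbabilityMeasure β} {x : α} {y : β} (hν : Tendsto ν l (𝓝 (diracProba x)))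
    (hν' : Tendsto ν' l (𝓝 (diracProba y))) :
    Tendsto (fun i => (ν i).prod (ν' i)) l (𝓝 (diracProba (x, y))) :=
  diracProba_prod_diracProba x y ▸ (continuous_prod.tendsto _).comp (hν.prodMk_nhds hν')

variable {M : Type*} [AddMonoid M] [TopologicalSpace M] [ContinuousAdd M]
  [SecondCountableTopology M] [PseudoMetrizableSpace M] [MeasurableSpace M] [BorelSpace M]

lemma tendsto_map_add_prod_of_tendsto_diracProba_zero {ι : Type*} {l : Filter ι}
    (P : ProbabilityMeasure M) {ρ : ι → ProbabilityMeasure M}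
    (hρ : Tendsto ρ l (𝓝 (diracProba 0))) :
    Tendsto (fun i => (P.prod (ρ i)).map continuous_add.aemeasurable) l (𝓝 P) := by
  have hcont : Continuous fun ρ : ProbabilityMeasure M =>
      (P.prod ρ).map continuous_add.aemeasurable :=
    (continuous_map continuous_add).comp
      (continuous_prod.comp (continuous_const.prodMk continuous_id))
  have hP : (P.prod (diracProba 0)).map continuous_add.aemeasurable = P := by
    apply toMeasure_injective
    exact Measure.conv_dirac_zero (P : Measure M)
  have h := (hcont.tendsto _).comp hρ
  rwa [hP] at h

end MeasureTheory.ProbabilityMeasure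

/-- Robustness of the Markov product against small perturbations of the response:
if `εₙ → 0` in distribution, `εₙ ⊥ (X,Y)`, and `(Yₙ, Yₙ')` is the Markov product of
`(X, Y + εₙ)`, then `(Yₙ, Yₙ')` converges in distribution to the Markov product
`(Y, Y')` of `(X, Y)`. -/
theorem markov_product_noise_resistance {p : ℕ}
    (μ : Measure Ω) [IsProbabilityMeasure μ]
    (X : Ω → (Fin p → ℝ)) (hX : Measurable X)
    (Y Y' : Ω → ℝ) (hY : Measurable Y) (hY' : Measurable Y')
    (hcopy : IsCondIndepCopy μ X hX Y Y')
    (εn : ℕ → Ω → ℝ) (hεn : ∀ n, Measurable (εn n))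
    (hindep : ∀ n, IndepFun (εn n) (fun ω => (X ω, Y ω)) μ)
    (hε0 : ∀ g : BoundedContinuousFunction ℝ ℝ,
      Tendsto (fun n => ∫ ω, g (εn n ω) ∂μ) atTop (nhds (g 0)))
    (Yn' : ℕ → Ω → ℝ) (hYn' : ∀ n, Measurable (Yn' n))
    (hcopyn : ∀ n, IsCondIndepCopy μ X hX (fun ω => Y ω + εn n ω) (Yn' n)) :
    ∀ f : BoundedContinuousFunction (ℝ × ℝ) ℝ,
      Tendsto (fun n => ∫ ω, f (Y ω + εn n ω, Yn' n ω) ∂μ) atTop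
        (nhds (∫ ω, f (Y ω, Y' ω) ∂μ)) := by
  intro f
  let P : ProbabilityMeasure (ℝ × ℝ) :=
    ⟨μ.map (fun ω => (Y ω, Y' ω)), Measure.isProbabilityMeasure_map (by fun_prop)⟩
  let ν : ℕ → ProbabilityMeasure ℝ :=
    fun n => ⟨μ.map (εn n), Measure.isProbabilityMeasure_map (hεn n).aemeasurable⟩
  have hν : Tendsto ν atTop (𝓝 (diracProba 0)) := by
    refine ProbabilityMeasure.tendsto_iff_forall_integral_tendsto.mpr fun g => ?_
    simpa [ν, diracProba, integral_map (hεn _).aemeasurable g.continuous.aestronglyMeasurable]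
      using hε0 g
  have hlim := ProbabilityMeasure.tendsto_iff_forall_integral_tendsto.mp
    (P.tendsto_map_add_prod_of_tendsto_diracProba_zero
      (ProbabilityMeasure.tendsto_prod_diracProba hν hν)) f
  have hlaw : ∀ n, μ.map (fun ω => (Y ω + εn n ω, Yn' n ω)) =
      ((P.prod ((ν n).prod (ν n))).map continuous_add.aemeasurable : Measure (ℝ × ℝ)) :=
    fun n => hcopy.map_add_pair_eq_conv hY hY' (hεn n) (hYn' n) (hindep n) (hcopyn n)
  convert hlim using 2 with n
  · rw [← hlaw n, integral_map (by fun_prop) f.continuous.aestronglyMeasurable]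
  · exact (integral_map (by fun_prop) f.continuous.aestronglyMeasurable).symm
end

section
/- For p, q > 1 and the (p+q)×(p+q) block matrix Σ with unit diagonal, off-diagonal entries ρ_X within the first p×p block, ρ_Y within the last q×q block, and ρ_{XY} in all cross entries, Σ is positive semidefinite if and only if ρ_X ∈ [−1/(p−1), 1], ρ_Y ∈ [−1/(q−1), 1], and ρ_{XY}² ≤ ((1+(p−1)ρ_X)/p) · ((1+(q−1)ρ_Y)/q). -/
open Matrix

/-- The `(p+q) × (p+q)` block matrix with unit diagonal, correlation `ρX`
within the first block, `ρY` within the second block, and `ρXY` across. -/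
def blockEquicorr (p q : ℕ) (ρX ρY ρXY : ℝ) :
    Matrix (Fin p ⊕ Fin q) (Fin p ⊕ Fin q) ℝ :=
  fun a b =>
    match a, b with
    | Sum.inl i, Sum.inl j => if i = j then 1 else ρX
    | Sum.inl _, Sum.inr _ => ρXY
    | Sum.inr _, Sum.inl _ => ρXY
    | Sum.inr i, Sum.inr j => if i = j then 1 else ρY

/-!
Write `v = (x, y)` and let `s = ∑ xᵢ`, `t = ∑ yⱼ`. The quadratic form of `Σ` is
`(1 - ρX) (‖x‖² - s²/p) + (1 - ρY) (‖y‖² - t²/q) + a s² + 2 ρXY s t + b t²` with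
`a = (1 + (p-1) ρX)/p` and `b = (1 + (q-1) ρY)/q`. When `ρX, ρY ≤ 1` the centred parts are
nonnegative by Cauchy–Schwarz; they vanish on constant blocks, while `eᵢ - eⱼ` isolates
`1 - ρ`. So `Σ ⪰ 0` exactly when `ρX, ρY ≤ 1` and the `2 × 2` matrix
`[[a, ρXY], [ρXY, b]]` is positive semidefinite.
-/

open Finset

theorem forall_quadratic_nonneg_iff (a b c : ℝ) :
    (∀ s t : ℝ, 0 ≤ a * s ^ 2 + 2 * c * s * t + b * t ^ 2) ↔ 0 ≤ a ∧ 0 ≤ b ∧ c ^ 2 ≤ a * b := by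
  constructor
  · intro h
    have hdisc : discrim a (2 * c) b ≤ 0 := discrim_le_zero fun s => by
      simpa [sq] using h s 1
    refine ⟨by simpa using h 1 0, by simpa using h 0 1, ?_⟩
    rw [discrim] at hdisc
    linarith
  · rintro ⟨ha, hb, hc⟩ s t
    rcases ha.eq_or_lt with rfl | ha
    · have hc0 : c = 0 := by nlinarith
      subst hc0
      nlinarith
    · -- `a · Q(s, t) = (a s + c t)² + (a b - c²) t²`
      nlinarith [sq_nonneg (a * s + c * t), mul_nonneg (sub_nonneg.2 hc) (sq_nonneg t)]

theorem neg_one_div_sub_one_le_iff {n : ℝ} (hn : 1 < n) (ρ : ℝ) :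
    -(1 / (n - 1)) ≤ ρ ↔ 0 ≤ (1 + (n - 1) * ρ) / n := by
  rw [neg_le, le_div_iff₀ (by linarith), le_div_iff₀ (by linarith)]
  constructor <;> intro h <;> linarith

section EquicorrForm

variable {ι : Type*} [Fintype ι]

/-- The quadratic form of the `ι × ι` equicorrelation matrix with off-diagonal entry `ρ`. -/
def equicorrForm (ρ : ℝ) (x : ι → ℝ) : ℝ :=
  (1 - ρ) * ∑ i, x i ^ 2 + ρ * (∑ i, x i) ^ 2

theorem sum_mul_sum_ite_eq_equicorrForm [DecidableEq ι] (ρ : ℝ) (x : ι → ℝ) :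
    ∑ i, x i * ∑ j, (if i = j then 1 else ρ) * x j = equicorrForm ρ x := by
  have row (i : ι) : ∑ j, (if i = j then 1 else ρ) * x j = ρ * ∑ j, x j + (1 - ρ) * x i := by
    calc ∑ j, (if i = j then 1 else ρ) * x j
        = ∑ j, (ρ * x j + if i = j then (1 - ρ) * x j else 0) :=
          sum_congr rfl fun j _ => by split_ifs <;> ring
      _ = _ := by rw [sum_add_distrib, Fintype.sum_ite_eq, mul_sum]
  simp only [row, mul_add, sum_add_distrib, ← sum_mul, mul_left_comm _ (1 - ρ), ← mul_sum,
    equicorrForm, sq]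
  ring

theorem equicorrForm_const (ρ s : ℝ) (hι : Fintype.card ι ≠ 0) :
    equicorrForm ρ (fun _ : ι => s / Fintype.card ι)
      = (1 + ((Fintype.card ι : ℝ) - 1) * ρ) / Fintype.card ι * s ^ 2 := by
  simp only [equicorrForm, sum_const, card_univ, nsmul_eq_mul]
  field_simp
  ring

theorem equicorrForm_single_sub_single [DecidableEq ι] (ρ : ℝ) {i j : ι} (hij : i ≠ j) :
    equicorrForm ρ (Pi.single i 1 - Pi.single j 1) = 2 * (1 - ρ) := by
  have hsq (k : ι) : (Pi.single i 1 - Pi.single j 1 : ι → ℝ) k ^ 2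
      = (Pi.single i 1 : ι → ℝ) k + (Pi.single j 1 : ι → ℝ) k := by
    simp only [Pi.sub_apply, Pi.single_apply]
    split_ifs <;> simp_all
  simp only [equicorrForm, hsq]
  simp only [sum_add_distrib, Pi.sub_apply, sum_sub_distrib, sum_pi_single', mem_univ, if_true]
  ring

theorem le_one_of_forall_equicorrForm_nonneg (hι : 1 < Fintype.card ι) {ρ : ℝ}
    (h : ∀ x : ι → ℝ, 0 ≤ equicorrForm ρ x) : ρ ≤ 1 := by
  classical
  obtain ⟨i, j, hij⟩ := Fintype.exists_pair_of_one_lt_card hι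
  have := h (Pi.single i 1 - Pi.single j 1)
  rw [equicorrForm_single_sub_single ρ hij] at this
  linarith

theorem equicorrForm_zero (ρ : ℝ) : equicorrForm ρ (0 : ι → ℝ) = 0 := by
  simp [equicorrForm]

theorem mul_sq_sum_le_equicorrForm {ρ : ℝ} (hρ : ρ ≤ 1) (x : ι → ℝ) :
    (1 + ((Fintype.card ι : ℝ) - 1) * ρ) / Fintype.card ι * (∑ i, x i) ^ 2
      ≤ equicorrForm ρ x := by
  rcases isEmpty_or_nonempty ι with hι | hι
  · simp [equicorrForm]
  have hn : (0 : ℝ) < Fintype.card ι := by exact_mod_cast Fintype.card_pos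
  have cauchySchwarz : (∑ i, x i) ^ 2 / Fintype.card ι ≤ ∑ i, x i ^ 2 :=
    div_le_of_le_mul₀ hn.le (sum_nonneg fun i _ => sq_nonneg (x i))
      (by simpa [mul_comm] using sq_sum_le_card_mul_sum_sq (s := univ) (f := x))
  calc (1 + ((Fintype.card ι : ℝ) - 1) * ρ) / Fintype.card ι * (∑ i, x i) ^ 2
      = (1 - ρ) * ((∑ i, x i) ^ 2 / Fintype.card ι) + ρ * (∑ i, x i) ^ 2 := by
        field_simp
        ring
    _ ≤ equicorrForm ρ x := by
        unfold equicorrForm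
        gcongr

end EquicorrForm

section TwoBlocks

variable {ι κ : Type*} [Fintype ι] [Fintype κ]

theorem forall_equicorrForm_add_nonneg_iff (hι : 1 < Fintype.card ι) (hκ : 1 < Fintype.card κ)
    (ρX ρY c : ℝ) :
    (∀ (x : ι → ℝ) (y : κ → ℝ),
        0 ≤ equicorrForm ρX x + equicorrForm ρY y + 2 * c * (∑ i, x i) * ∑ j, y j) ↔
      ρX ≤ 1 ∧ ρY ≤ 1 ∧ ∀ s t : ℝ,
        0 ≤ (1 + ((Fintype.card ι : ℝ) - 1) * ρX) / Fintype.card ι * s ^ 2 + 2 * c * s * t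
          + (1 + ((Fintype.card κ : ℝ) - 1) * ρY) / Fintype.card κ * t ^ 2 := by
  constructor
  · intro h
    refine ⟨le_one_of_forall_equicorrForm_nonneg hι fun x => ?_,
      le_one_of_forall_equicorrForm_nonneg hκ fun y => ?_, fun s t => ?_⟩
    · simpa [equicorrForm_zero] using h x 0
    · simpa [equicorrForm_zero] using h 0 y
    · have hconst := h (fun _ => s / Fintype.card ι) (fun _ => t / Fintype.card κ)
      rw [equicorrForm_const ρX s (by omega), equicorrForm_const ρY t (by omega)] at hconst
      simp only [sum_const, card_univ, nsmul_eq_mul,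
        mul_div_cancel₀ _ (by positivity : (Fintype.card ι : ℝ) ≠ 0),
        mul_div_cancel₀ _ (by positivity : (Fintype.card κ : ℝ) ≠ 0)] at hconst
      linarith
  · rintro ⟨hX, hY, hst⟩ x y
    have hsums := hst (∑ i, x i) (∑ j, y j)
    have hx := mul_sq_sum_le_equicorrForm hX x
    have hy := mul_sq_sum_le_equicorrForm hY y
    linarith

end TwoBlocks

theorem blockEquicorr_isHermitian (p q : ℕ) (ρX ρY ρXY : ℝ) :
    (blockEquicorr p q ρX ρY ρXY).IsHermitian := by
  ext (i | i) (j | j) <;> simp only [conjTranspose_apply, blockEquicorr, star_trivial]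
  · exact if_congr eq_comm rfl rfl
  · exact if_congr eq_comm rfl rfl

theorem sum_elim_dotProduct_blockEquicorr_mulVec (p q : ℕ) (ρX ρY ρXY : ℝ)
    (x : Fin p → ℝ) (y : Fin q → ℝ) :
    Sum.elim x y ⬝ᵥ (blockEquicorr p q ρX ρY ρXY *ᵥ Sum.elim x y)
      = equicorrForm ρX x + equicorrForm ρY y + 2 * ρXY * (∑ i, x i) * ∑ j, y j := by
  simp only [dotProduct, mulVec, Fintype.sum_sum_type, blockEquicorr, Sum.elim_inl, Sum.elim_inr,
    mul_add, sum_add_distrib, sum_mul_sum_ite_eq_equicorrForm]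
  simp only [← mul_sum, ← sum_mul]
  ring

theorem blockEquicorr_forall_quadForm_nonneg_iff (p q : ℕ) (ρX ρY ρXY : ℝ) :
    (∀ v, 0 ≤ v ⬝ᵥ (blockEquicorr p q ρX ρY ρXY *ᵥ v)) ↔ ∀ (x : Fin p → ℝ) (y : Fin q → ℝ),
      0 ≤ equicorrForm ρX x + equicorrForm ρY y + 2 * ρXY * (∑ i, x i) * ∑ j, y j := by
  simp only [← sum_elim_dotProduct_blockEquicorr_mulVec]
  exact ⟨fun h x y => h _, fun h v => Sum.elim_comp_inl_inr v ▸ h _ _⟩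

/-- Characterization of positive semidefiniteness for the block-equicorrelated
matrix: for `p, q > 1`, `Σ ⪰ 0` iff `ρX ∈ [−1/(p−1), 1]`, `ρY ∈ [−1/(q−1), 1]`
and `ρXY² ≤ ((1+(p−1)ρX)/p)·((1+(q−1)ρY)/q)`. -/
theorem blockEquicorr_posSemidef_iff (p q : ℕ) (hp : 1 < p) (hq : 1 < q)
    (ρX ρY ρXY : ℝ) :
    (blockEquicorr p q ρX ρY ρXY).PosSemidef ↔
      ρX ∈ Set.Icc (-(1 / ((p : ℝ) - 1))) 1 ∧
      ρY ∈ Set.Icc (-(1 / ((q : ℝ) - 1))) 1 ∧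
      ρXY ^ 2 ≤ ((1 + ((p : ℝ) - 1) * ρX) / p) * ((1 + ((q : ℝ) - 1) * ρY) / q) := by
  have hp' : (1 : ℝ) < p := by exact_mod_cast hp
  have hq' : (1 : ℝ) < q := by exact_mod_cast hq
  rw [posSemidef_iff_dotProduct_mulVec, and_iff_right (blockEquicorr_isHermitian p q ρX ρY ρXY)]
  simp only [star_trivial, blockEquicorr_forall_quadForm_nonneg_iff,
    forall_equicorrForm_add_nonneg_iff (ι := Fin p) (κ := Fin q) (by simpa) (by simpa),
    Fintype.card_fin, forall_quadratic_nonneg_iff, Set.mem_Icc, neg_one_div_sub_one_le_iff hp',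
    neg_one_div_sub_one_le_iff hq']
  tauto
end
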